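/- arXiv:2109.09441 — 5 statements merged into one kernel-verified Lean document; each statement's English description precedes it below -/
import Mathlib

section
/- For x ∈ ℝⁿ with x ≠ 0 and 0 < λ < |x|, for every z ∈ ℝⁿ with |z - x| > λ, we have λ²|z| / (|z-x|² · |x + λ²(z-x)/|z-x|²|) < 1. -/
/-!
Write `w = z - x` and `r = ‖w‖`. Clearing the denominator, the claim is
`λ²‖x + w‖ < ‖r² x + λ² w‖`, and the difference of the squares factors as
`(r² - λ²) (‖x‖² (r² + λ²) + 2 λ² ⟪x, w⟫)`. The first factor is positive since `λ < r`; by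
Cauchy–Schwarz the second is at least `‖x‖ (‖x‖ (r² + λ²) - 2 λ² r)`, which is positive since
`‖x‖ > λ` and `r² + λ² ≥ 2 λ r`.
-/

open RealInnerProductSpace

variable {E : Type*} [NormedAddCommGroup E] [InnerProductSpace ℝ E]

theorem norm_sq_smul_add_smul_sub_sq_mul_norm_add_sq (x w : E) (l : ℝ) :
    ‖(‖w‖ ^ 2) • x + (l ^ 2) • w‖ ^ 2 - l ^ 4 * ‖x + w‖ ^ 2 =
      (‖w‖ ^ 2 - l ^ 2) * (‖x‖ ^ 2 * (‖w‖ ^ 2 + l ^ 2) + 2 * l ^ 2 * ⟪x, w⟫) := by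
  simp only [norm_add_sq_real, norm_smul, real_inner_smul_left, real_inner_smul_right,
    Real.norm_eq_abs, abs_of_nonneg (sq_nonneg ‖w‖), abs_of_nonneg (sq_nonneg l)]
  ring

theorem norm_sq_mul_add_two_mul_inner_pos (x w : E) {l : ℝ} (hl : 0 < l) (hlx : l < ‖x‖) :
    0 < ‖x‖ ^ 2 * (‖w‖ ^ 2 + l ^ 2) + 2 * l ^ 2 * ⟪x, w⟫ := by
  have hcs : -(‖x‖ * ‖w‖) ≤ ⟪x, w⟫ := (abs_le.mp (abs_real_inner_le_norm x w)).1
  have hamgm : 2 * l * ‖w‖ ≤ ‖w‖ ^ 2 + l ^ 2 := by nlinarith [sq_nonneg (‖w‖ - l)]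
  have hlt : 2 * l ^ 2 * ‖w‖ < ‖x‖ * (‖w‖ ^ 2 + l ^ 2) := by
    nlinarith [mul_le_mul_of_nonneg_left hamgm hl.le,
      mul_lt_mul_of_pos_right hlx (by positivity : 0 < ‖w‖ ^ 2 + l ^ 2)]
  nlinarith [mul_lt_mul_of_pos_left hlt (hl.trans hlx), sq_nonneg l]

theorem sq_mul_norm_add_lt_norm_smul_add_smul (x w : E) {l : ℝ} (hl : 0 < l) (hlx : l < ‖x‖)
    (hlw : l < ‖w‖) : l ^ 2 * ‖x + w‖ < ‖(‖w‖ ^ 2) • x + (l ^ 2) • w‖ := by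
  have hsq : 0 < ‖w‖ ^ 2 - l ^ 2 := by nlinarith
  have hdiff := norm_sq_smul_add_smul_sub_sq_mul_norm_add_sq x w l
  refine lt_of_pow_lt_pow_left₀ 2 (norm_nonneg _) ?_
  nlinarith [mul_pos hsq (norm_sq_mul_add_two_mul_inner_pos x w hl hlx)]

theorem sphere_inversion_ratio_lt_one_general (n : ℕ) (x z : EuclideanSpace ℝ (Fin n)) (l : ℝ)
    (hl : 0 < l) (hlx : l < ‖x‖) (hz : l < ‖z - x‖) :
    l ^ 2 * ‖z‖ / (‖z - x‖ ^ 2 * ‖x + (l ^ 2 / ‖z - x‖ ^ 2) • (z - x)‖) < 1 := by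
  have hr : 0 < ‖z - x‖ ^ 2 := by nlinarith
  have hden : ‖z - x‖ ^ 2 * ‖x + (l ^ 2 / ‖z - x‖ ^ 2) • (z - x)‖ =
      ‖(‖z - x‖ ^ 2) • x + (l ^ 2) • (z - x)‖ := by
    rw [← Real.norm_of_nonneg hr.le, ← norm_smul, smul_add, smul_smul, Real.norm_of_nonneg hr.le,
      mul_div_cancel₀ _ hr.ne']
  have key := sq_mul_norm_add_lt_norm_smul_add_smul x (z - x) hl hlx hz
  rw [add_sub_cancel] at key
  rw [hden, div_lt_one ((by positivity : 0 ≤ l ^ 2 * ‖z‖).trans_lt key)]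
  exact key

/-- For `x ≠ 0`, `0 < λ < |x|` and `|z - x| > λ`, the quantity
`λ²|z| / (|z-x|² · |x + λ²(z-x)/|z-x|²|)` is less than `1`. -/
theorem sphere_inversion_ratio_lt_one (n : ℕ) (x z : EuclideanSpace ℝ (Fin n)) (l : ℝ)
    (hx : x ≠ 0) (hl : 0 < l) (hlx : l < ‖x‖) (hz : l < ‖z - x‖) :
    l ^ 2 * ‖z‖ / (‖z - x‖ ^ 2 * ‖x + (l ^ 2 / ‖z - x‖ ^ 2) • (z - x)‖) < 1 :=
  sphere_inversion_ratio_lt_one_general n x z l hl hlx hz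
end

section
/- Let n ≥ 1, σ ∈ (0, n/2), α < 2σ, p > 0. Suppose u : ℝⁿ → ℝ is continuous, positive, and satisfies u(x) = ∫_{ℝⁿ} u(y)^p |y|^{-α} |x - y|^{-(n-2σ)} dy for all x. Then liminf_{|x|→∞} |x|^{n-2σ} u(x) ≥ ∫_{ℝⁿ} u(y)^p |y|^{-α} dy > 0. -/
/-!
With `β = n - 2σ` and `F = u ^ p ‖·‖ ^ (-α) ∈ L¹`, the equation says that `u` is the Riesz
potential of `F`. For each fixed `y`, `‖x‖ ^ β ‖x - y‖ ^ (-β) → 1` as `‖x‖ → ∞`, so Fatou's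
lemma gives `∫ F ≤ liminf ‖x‖ ^ β u x`.

That liminf is a genuine real number only because `‖x‖ ^ β u x` does not tend to infinity.
The kernel integrates to `O(r ^ (n - β))` over every ball of radius `r`, uniformly in the centre,
so by Tonelli `∫_{B(0, r)} ‖x‖ ^ β u x = O(r ^ n)`, and averaging over the annulus
`r / 2 < ‖x‖ < r` gives points of arbitrarily large norm where `‖x‖ ^ β u x` is bounded.
-/

open MeasureTheory Filter Metric Set Module
open scoped ENNReal Topology Pointwise

theorem ofReal_rpow_mul_ofReal_rpow {r : ℝ} (hr : 0 < r) (a b : ℝ) :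
    ENNReal.ofReal (r ^ a) * ENNReal.ofReal (r ^ b) = ENNReal.ofReal (r ^ (a + b)) := by
  rw [← ENNReal.ofReal_mul (by positivity), Real.rpow_add hr]

theorem tendsto_norm_rpow_mul_norm_sub_rpow_neg {E : Type*} [SeminormedAddCommGroup E] (y : E)
    (β : ℝ) :
    Tendsto (fun x => ‖x‖ ^ β * ‖x - y‖ ^ (-β)) (comap norm atTop) (𝓝 1) := by
  have hnorm : Tendsto (fun x : E => ‖x‖) (comap norm atTop) atTop := tendsto_comap
  have hsmall : Tendsto (fun x : E => ‖y‖ / ‖x‖) (comap norm atTop) (𝓝 0) :=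
    hnorm.const_div_atTop _
  have hratio : Tendsto (fun x : E => ‖x - y‖ / ‖x‖) (comap norm atTop) (𝓝 1) := by
    refine tendsto_of_tendsto_of_tendsto_of_le_of_le' (g := fun x => 1 - ‖y‖ / ‖x‖)
      (h := fun x => 1 + ‖y‖ / ‖x‖) (by simpa using hsmall.const_sub 1)
      (by simpa using hsmall.const_add 1) ?_ ?_ <;>
    filter_upwards [hnorm.eventually_gt_atTop 0] with x hx
    · rw [one_sub_div hx.ne', div_le_div_iff_of_pos_right hx]
      exact norm_sub_norm_le x y
    · rw [one_add_div hx.ne', div_le_div_iff_of_pos_right hx]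
      exact norm_sub_le x y
  have hpow := (Real.continuousAt_rpow_const 1 (-β) (Or.inl one_ne_zero)).tendsto.comp hratio
  rw [Real.one_rpow] at hpow
  refine hpow.congr fun x => ?_
  rw [Function.comp_apply, Real.div_rpow (norm_nonneg _) (norm_nonneg _),
    Real.rpow_neg (norm_nonneg x), div_inv_eq_mul, mul_comm]

theorem le_liminf_of_ofReal_le_liminf {ι : Type*} {l : Filter ι} {g : ι → ℝ} {a C : ℝ}
    (hg : ∀ i, 0 ≤ g i) (hC : ∃ᶠ i in l, g i ≤ C)
    (h : ENNReal.ofReal a ≤ liminf (fun i => ENNReal.ofReal (g i)) l) :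
    a ≤ liminf g l := by
  have : l.NeBot := (frequently_true_iff_neBot l).1 (hC.mono fun _ _ => trivial)
  have hcobdd : IsCoboundedUnder (· ≥ ·) l g := .of_frequently_le hC
  have hbdd : IsBoundedUnder (· ≥ ·) l g := isBoundedUnder_of ⟨0, hg⟩
  rw [← Function.comp_def, ← ENNReal.ofReal_mono.map_liminf_of_continuousAt g
    ENNReal.continuous_ofReal.continuousAt hcobdd hbdd] at h
  exact (ENNReal.ofReal_le_ofReal_iff (le_liminf_of_le hcobdd (.of_forall hg))).1 h

theorem measure_ball_sdiff_closedBall_ne_zero {E : Type*} [NormedAddCommGroup E]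
    [NormedSpace ℝ E] [Nontrivial E] [MeasurableSpace E] (μ : Measure E) [μ.IsOpenPosMeasure]
    {a b : ℝ} (hb : 0 ≤ b) (hba : b < a) :
    μ (ball (0 : E) a \ closedBall 0 b) ≠ 0 := by
  obtain ⟨x, hx⟩ := exists_norm_eq E (by linarith : 0 ≤ (a + b) / 2)
  refine (isOpen_ball.sdiff isClosed_closedBall).measure_ne_zero μ ⟨x, ?_⟩
  simp only [Set.mem_sdiff, mem_ball_zero_iff, mem_closedBall_zero_iff, hx, not_le]
  constructor <;> linarith

section AddHaar

variable {E : Type*} [NormedAddCommGroup E] [NormedSpace ℝ E] [FiniteDimensional ℝ E]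
  [MeasurableSpace E] [BorelSpace E] (μ : Measure E) [μ.IsAddHaarMeasure]

theorem setLIntegral_ball_comp_norm_sub {f : ℝ → ℝ≥0∞} (hf : Measurable f) (y : E) {r : ℝ}
    (hr : 0 < r) :
    ∫⁻ x in ball y r, f ‖x - y‖ ∂μ =
      ENNReal.ofReal (r ^ finrank ℝ E) * ∫⁻ x in ball 0 1, f (r * ‖x‖) ∂μ := by
  have htrans : ∫⁻ x in ball y r, f ‖x - y‖ ∂μ = ∫⁻ x in ball 0 r, f ‖x‖ ∂μ := by
    rw [← (measurePreserving_add_right μ y).setLIntegral_comp_preimage_emb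
      (measurableEmbedding_addRight y)]
    simp [preimage_add_right_ball]
  have hμ : μ = ENNReal.ofReal (r ^ finrank ℝ E) • μ.map (r • ·) := by
    rw [Measure.map_addHaar_smul μ hr.ne', smul_smul, abs_of_pos (by positivity),
      ← ENNReal.ofReal_mul (by positivity), mul_inv_cancel₀ (by positivity),
      ENNReal.ofReal_one, one_smul]
  have hpre : (r • ·) ⁻¹' ball (0 : E) r = ball 0 1 := by
    ext x
    simp [norm_smul, abs_of_pos hr, hr]
  rw [htrans]
  conv_lhs => rw [hμ]
  rw [Measure.restrict_smul, lintegral_smul_measure, smul_eq_mul,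
    setLIntegral_map measurableSet_ball (by fun_prop) (measurable_const_smul r)]
  simp [hpre, norm_smul, abs_of_pos hr]

theorem setLIntegral_ball_norm_sub_rpow_neg (y : E) {r : ℝ} (hr : 0 < r) (β : ℝ) :
    ∫⁻ x in ball y r, ENNReal.ofReal (‖x - y‖ ^ (-β)) ∂μ =
      ENNReal.ofReal (r ^ ((finrank ℝ E : ℝ) - β)) *
        ∫⁻ x in ball 0 1, ENNReal.ofReal (‖x‖ ^ (-β)) ∂μ := by
  rw [setLIntegral_ball_comp_norm_sub μ (f := fun t => ENNReal.ofReal (t ^ (-β))) (by fun_prop)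
    y hr]
  simp_rw [Real.mul_rpow hr.le (norm_nonneg _),
    ENNReal.ofReal_mul (by positivity : 0 ≤ r ^ (-β))]
  rw [lintegral_const_mul' _ _ ENNReal.ofReal_ne_top, ← mul_assoc, ← Real.rpow_natCast,
    ofReal_rpow_mul_ofReal_rpow hr, sub_eq_add_neg]

theorem setLIntegral_unitBall_norm_rpow_neg_ne_top {β : ℝ} (hβ0 : 0 ≤ β)
    (hβd : β < finrank ℝ E) :
    ∫⁻ x in ball (0 : E) 1, ENNReal.ofReal (‖x‖ ^ (-β)) ∂μ ≠ ∞ := by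
  have hd : 1 ≤ finrank ℝ E := by exact_mod_cast hβ0.trans_lt hβd
  refine (Integrable.lintegral_lt_top ?_).ne
  refine integrableOn_ball_of_norm_le_rpow (C := 1) hd hβd (.of_forall fun x => ?_)
    (by fun_prop : Measurable fun x : E => ‖x‖ ^ (-β)).aestronglyMeasurable
  simp [abs_of_nonneg (Real.rpow_nonneg (norm_nonneg x) _)]

noncomputable def rieszKernelBallConst (β : ℝ) : ℝ≥0∞ :=
  (∫⁻ x in ball (0 : E) 1, ENNReal.ofReal (‖x‖ ^ (-β)) ∂μ) + μ (ball 0 1)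

theorem rieszKernelBallConst_ne_top {β : ℝ} (hβ0 : 0 ≤ β) (hβd : β < finrank ℝ E) :
    rieszKernelBallConst μ β ≠ ∞ :=
  ENNReal.add_ne_top.2 ⟨setLIntegral_unitBall_norm_rpow_neg_ne_top μ hβ0 hβd,
    measure_ball_lt_top.ne⟩

variable [Nontrivial E]

theorem setLIntegral_ball_norm_sub_rpow_neg_le {β : ℝ} (hβ : 0 ≤ β) (z y : E) {r : ℝ}
    (hr : 0 < r) :
    ∫⁻ x in ball z r, ENNReal.ofReal (‖x - y‖ ^ (-β)) ∂μ ≤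
      rieszKernelBallConst μ β * ENNReal.ofReal (r ^ ((finrank ℝ E : ℝ) - β)) := by
  have hfar : ∀ x ∈ ball z r \ ball y r,
      ENNReal.ofReal (‖x - y‖ ^ (-β)) ≤ ENNReal.ofReal (r ^ (-β)) := by
    intro x hx
    have hxy : r ≤ ‖x - y‖ := by simpa [dist_eq_norm] using hx.2
    exact ENNReal.ofReal_le_ofReal (Real.rpow_le_rpow_of_nonpos hr hxy (neg_nonpos.2 hβ))
  calc ∫⁻ x in ball z r, ENNReal.ofReal (‖x - y‖ ^ (-β)) ∂μ
      ≤ ∫⁻ x in ball y r ∪ ball z r \ ball y r, ENNReal.ofReal (‖x - y‖ ^ (-β)) ∂μ :=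
        lintegral_mono_set (by simp)
    _ ≤ ∫⁻ x in ball y r, ENNReal.ofReal (‖x - y‖ ^ (-β)) ∂μ +
          ∫⁻ x in ball z r \ ball y r, ENNReal.ofReal (‖x - y‖ ^ (-β)) ∂μ :=
        lintegral_union_le _ _ _
    _ ≤ ∫⁻ x in ball y r, ENNReal.ofReal (‖x - y‖ ^ (-β)) ∂μ +
          ENNReal.ofReal (r ^ (-β)) * μ (ball z r) := by
        gcongr
        calc _ ≤ ∫⁻ _ in ball z r \ ball y r, ENNReal.ofReal (r ^ (-β)) ∂μ :=
              setLIntegral_mono' (measurableSet_ball.diff measurableSet_ball) hfar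
          _ ≤ _ := by
              rw [setLIntegral_const]
              gcongr
              exact sdiff_subset
    _ = _ := by
        rw [setLIntegral_ball_norm_sub_rpow_neg μ y hr, Measure.addHaar_ball μ z hr.le,
          ← mul_assoc, ← Real.rpow_natCast, ofReal_rpow_mul_ofReal_rpow hr, neg_add_eq_sub,
          rieszKernelBallConst]
        ring

end AddHaar

section RieszPotential

variable {E : Type*} [NormedAddCommGroup E] [MeasurableSpace E]

/-- Unnormalised, and indexed by the exponent `β` of the kernel rather than by the order. -/
noncomputable def rieszPotential (μ : Measure E) (β : ℝ) (F : E → ℝ≥0∞) (x : E) : ℝ≥0∞ :=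
  ∫⁻ y, F y * ENNReal.ofReal (‖x - y‖ ^ (-β)) ∂μ

variable {μ : Measure E} {F : E → ℝ≥0∞}

theorem ofReal_integral_eq_rieszPotential {f : E → ℝ} (hf0 : ∀ y, 0 ≤ f y) {β : ℝ} {x : E}
    (hx : Integrable (fun y => f y * ‖x - y‖ ^ (-β)) μ) :
    ENNReal.ofReal (∫ y, f y * ‖x - y‖ ^ (-β) ∂μ) =
      rieszPotential μ β (fun y => ENNReal.ofReal (f y)) x := by
  rw [ofReal_integral_eq_lintegral_ofReal hx
    (.of_forall fun y => mul_nonneg (hf0 y) (by positivity))]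
  simp_rw [ENNReal.ofReal_mul (hf0 _)]
  rfl

variable [BorelSpace E]

theorem lintegral_le_liminf_rpow_mul_rieszPotential [NormedSpace ℝ E] [Nontrivial E]
    (hF : AEMeasurable F μ) (β : ℝ) :
    ∫⁻ y, F y ∂μ ≤
      liminf (fun x => ENNReal.ofReal (‖x‖ ^ β) * rieszPotential μ β F x) (comap norm atTop) := by
  have hrw : ∀ x, ENNReal.ofReal (‖x‖ ^ β) * rieszPotential μ β F x =
      ∫⁻ y, F y * ENNReal.ofReal (‖x‖ ^ β * ‖x - y‖ ^ (-β)) ∂μ := by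
    intro x
    rw [rieszPotential, ← lintegral_const_mul' _ _ ENNReal.ofReal_ne_top]
    congr with y
    rw [ENNReal.ofReal_mul (by positivity)]
    ring
  have : (comap norm atTop : Filter E).NeBot := by rw [comap_norm_atTop]; infer_instance
  simp_rw [hrw]
  calc ∫⁻ y, F y ∂μ
      = ∫⁻ y, liminf (fun x => F y * ENNReal.ofReal (‖x‖ ^ β * ‖x - y‖ ^ (-β)))
          (comap norm atTop) ∂μ := by
        congr with y
        refine (Tendsto.liminf_eq ?_).symm
        simpa using ENNReal.Tendsto.const_mul
          (ENNReal.tendsto_ofReal (tendsto_norm_rpow_mul_norm_sub_rpow_neg y β))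
          (Or.inl (by simp))
    _ ≤ _ := lintegral_liminf_le' fun x => hF.mul (by fun_prop)

theorem measurable_rieszPotential [SecondCountableTopology E] [SFinite μ]
    (hF : AEMeasurable F μ) (β : ℝ) :
    Measurable (rieszPotential μ β F) := by
  have hmk : rieszPotential μ β F = rieszPotential μ β (hF.mk F) := by
    funext x
    exact lintegral_congr_ae (hF.ae_eq_mk.mono fun y hy => by simp only [hy])
  rw [hmk]
  exact Measurable.lintegral_prod_right'
    (f := fun p : E × E => hF.mk F p.2 * ENNReal.ofReal (‖p.1 - p.2‖ ^ (-β)))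
    ((hF.measurable_mk.comp measurable_snd).mul (by fun_prop))

variable [NormedSpace ℝ E] [FiniteDimensional ℝ E] [μ.IsAddHaarMeasure] [Nontrivial E]

theorem setLIntegral_ball_rieszPotential_le (hF : AEMeasurable F μ) {β : ℝ} (hβ : 0 ≤ β) (z : E)
    {r : ℝ} (hr : 0 < r) :
    ∫⁻ x in ball z r, rieszPotential μ β F x ∂μ ≤
      rieszKernelBallConst μ β * ENNReal.ofReal (r ^ ((finrank ℝ E : ℝ) - β)) * ∫⁻ y, F y ∂μ := by
  unfold rieszPotential
  rw [lintegral_lintegral_swap (hF.comp_snd.mul (by fun_prop)), ← lintegral_const_mul'' _ hF]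
  refine lintegral_mono fun y => ?_
  rw [lintegral_const_mul _ (by fun_prop), mul_comm (F y)]
  gcongr
  exact setLIntegral_ball_norm_sub_rpow_neg_le μ hβ z y hr

theorem setLIntegral_ball_rpow_mul_rieszPotential_le (hF : AEMeasurable F μ) {β : ℝ}
    (hβ : 0 ≤ β) {r : ℝ} (hr : 0 < r) :
    ∫⁻ x in ball 0 r, ENNReal.ofReal (‖x‖ ^ β) * rieszPotential μ β F x ∂μ ≤
      rieszKernelBallConst μ β * (∫⁻ y, F y ∂μ) * ENNReal.ofReal (r ^ (finrank ℝ E : ℝ)) := by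
  have hweight : ∀ᵐ x ∂μ.restrict (ball 0 r),
      ENNReal.ofReal (‖x‖ ^ β) * rieszPotential μ β F x ≤
        ENNReal.ofReal (r ^ β) * rieszPotential μ β F x := by
    refine ae_restrict_of_forall_mem measurableSet_ball fun x hx => ?_
    gcongr
    exact (mem_ball_zero_iff.1 hx).le
  calc _ ≤ ∫⁻ x in ball 0 r, ENNReal.ofReal (r ^ β) * rieszPotential μ β F x ∂μ :=
        lintegral_mono_ae hweight
    _ = ENNReal.ofReal (r ^ β) * ∫⁻ x in ball 0 r, rieszPotential μ β F x ∂μ :=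
        lintegral_const_mul' _ _ ENNReal.ofReal_ne_top
    _ ≤ ENNReal.ofReal (r ^ β) *
          (rieszKernelBallConst μ β * ENNReal.ofReal (r ^ ((finrank ℝ E : ℝ) - β)) *
            ∫⁻ y, F y ∂μ) := by
        gcongr
        exact setLIntegral_ball_rieszPotential_le hF hβ 0 hr
    _ = _ := by
        have hpow : ENNReal.ofReal (r ^ β) * ENNReal.ofReal (r ^ ((finrank ℝ E : ℝ) - β)) =
            ENNReal.ofReal (r ^ (finrank ℝ E : ℝ)) := by
          rw [ofReal_rpow_mul_ofReal_rpow hr, add_sub_cancel]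
        rw [← hpow]
        ring

theorem exists_lt_norm_rpow_mul_rieszPotential_le (hF : AEMeasurable F μ) {β : ℝ}
    (hβ : 0 ≤ β) {r : ℝ} (hr : 0 < r) :
    ∃ x, r / 2 < ‖x‖ ∧ ENNReal.ofReal (‖x‖ ^ β) * rieszPotential μ β F x ≤
      rieszKernelBallConst μ β * (∫⁻ y, F y ∂μ) / μ (ball 0 1 \ closedBall 0 2⁻¹) := by
  set A₁ : Set E := ball 0 1 \ closedBall 0 2⁻¹
  have hA : r • A₁ = ball 0 r \ closedBall 0 (r / 2) := by
    rw [smul_set_sdiff₀ hr.ne', smul_unitBall_of_pos hr, _root_.smul_closedBall _ _ (by norm_num),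
      smul_zero, Real.norm_of_nonneg hr.le, div_eq_mul_inv]
  have hμA : μ (r • A₁) = ENNReal.ofReal (r ^ finrank ℝ E) * μ A₁ :=
    Measure.addHaar_smul_of_nonneg μ hr.le A₁
  have hA0 : μ (r • A₁) ≠ 0 := by
    rw [hμA]
    exact mul_ne_zero (by simp [hr]) (measure_ball_sdiff_closedBall_ne_zero μ (by norm_num)
      (by norm_num))
  have hAtop : μ (r • A₁) ≠ ∞ := by
    rw [hA]; exact (measure_mono sdiff_subset |>.trans_lt measure_ball_lt_top).ne
  obtain ⟨x, hxA, hx⟩ := exists_le_setLAverage hA0 hAtop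
    (f := fun x => ENNReal.ofReal (‖x‖ ^ β) * rieszPotential μ β F x)
    ((by fun_prop : Measurable fun x : E => ENNReal.ofReal (‖x‖ ^ β)).mul
      (measurable_rieszPotential hF β)).aemeasurable
  refine ⟨x, ?_, hx.trans ?_⟩
  · rw [hA] at hxA
    simpa using hxA.2
  rw [setLAverage_eq, hμA]
  calc _ ≤ rieszKernelBallConst μ β * (∫⁻ y, F y ∂μ) * ENNReal.ofReal (r ^ (finrank ℝ E : ℝ)) /
          (ENNReal.ofReal (r ^ finrank ℝ E) * μ A₁) := by
        gcongr
        rw [hA]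
        exact (lintegral_mono_set sdiff_subset).trans
          (setLIntegral_ball_rpow_mul_rieszPotential_le hF hβ hr)
    _ = _ := by
        rw [Real.rpow_natCast, mul_comm _ (ENNReal.ofReal _),
          ENNReal.mul_div_mul_left _ _ (by simp [hr]) ENNReal.ofReal_ne_top]

theorem frequently_rpow_mul_rieszPotential_le (hF : AEMeasurable F μ) (hFint : ∫⁻ y, F y ∂μ ≠ ∞)
    {β : ℝ} (hβ0 : 0 ≤ β) (hβd : β < finrank ℝ E) :
    ∃ C ≠ ∞, ∃ᶠ x in comap norm atTop, ENNReal.ofReal (‖x‖ ^ β) * rieszPotential μ β F x ≤ C := by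
  refine ⟨rieszKernelBallConst μ β * (∫⁻ y, F y ∂μ) / μ (ball 0 1 \ closedBall 0 2⁻¹),
    ENNReal.div_ne_top (ENNReal.mul_ne_top (rieszKernelBallConst_ne_top μ hβ0 hβd) hFint)
      (measure_ball_sdiff_closedBall_ne_zero μ (by norm_num) (by norm_num)),
    frequently_comap.2 <| frequently_atTop.2 fun M => ?_⟩
  obtain ⟨x, hx, hle⟩ := exists_lt_norm_rpow_mul_rieszPotential_le hF hβ0
    (by positivity : 0 < 2 * max M 1)
  exact ⟨‖x‖, by linarith [le_max_left M 1], x, rfl, hle⟩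

theorem integral_le_liminf_norm_rpow_mul {f u : E → ℝ} (hf0 : ∀ y, 0 ≤ f y) (hf : Integrable f μ)
    {β : ℝ} (hβ0 : 0 ≤ β) (hβd : β < finrank ℝ E)
    (hker : ∀ x, Integrable (fun y => f y * ‖x - y‖ ^ (-β)) μ)
    (hu : ∀ x, u x = ∫ y, f y * ‖x - y‖ ^ (-β) ∂μ) :
    (∫ y, f y ∂μ) ≤ liminf (fun x => ‖x‖ ^ β * u x) (comap norm atTop) := by
  have hF : AEMeasurable (fun y => ENNReal.ofReal (f y)) μ := hf.aemeasurable.ennreal_ofReal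
  have hFint : ∫⁻ y, ENNReal.ofReal (f y) ∂μ = ENNReal.ofReal (∫ y, f y ∂μ) :=
    (ofReal_integral_eq_lintegral_ofReal hf (.of_forall hf0)).symm
  have hu0 : ∀ x, 0 ≤ u x := fun x =>
    (hu x).symm ▸ integral_nonneg fun y => mul_nonneg (hf0 y) (by positivity)
  have hg : ∀ x, ENNReal.ofReal (‖x‖ ^ β * u x) =
      ENNReal.ofReal (‖x‖ ^ β) * rieszPotential μ β (fun y => ENNReal.ofReal (f y)) x := by
    intro x
    rw [ENNReal.ofReal_mul (by positivity), hu, ofReal_integral_eq_rieszPotential hf0 (hker x)]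
  obtain ⟨C, hC, hfreq⟩ :=
    frequently_rpow_mul_rieszPotential_le hF (hFint ▸ ENNReal.ofReal_ne_top) hβ0 hβd
  refine le_liminf_of_ofReal_le_liminf (C := C.toReal)
    (fun x => mul_nonneg (by positivity) (hu0 x)) (hfreq.mono fun x hx => ?_) ?_
  · rwa [← ENNReal.ofReal_le_iff_le_toReal hC, hg]
  · simp_rw [hg, ← hFint]
    exact lintegral_le_liminf_rpow_mul_rieszPotential hF β

end RieszPotential

theorem liminf_lower_bound_general (n : ℕ) (σ α p : ℝ)
    (hσ : 0 < σ) (hσ2 : σ < (n : ℝ) / 2)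
    (u : EuclideanSpace ℝ (Fin n) → ℝ) (hpos : ∀ x, 0 < u x)
    (hint : Integrable (fun y : EuclideanSpace ℝ (Fin n) => u y ^ p * ‖y‖ ^ (-α)))
    (heq : ∀ x, u x = ∫ y, u y ^ p * ‖y‖ ^ (-α) * ‖x - y‖ ^ (-((n : ℝ) - 2 * σ))) :
    (∫ y, u y ^ p * ‖y‖ ^ (-α)) ≤
        liminf (fun x => ‖x‖ ^ ((n : ℝ) - 2 * σ) * u x)
          (comap (fun x : EuclideanSpace ℝ (Fin n) => ‖x‖) atTop) ∧
      0 < ∫ y, u y ^ p * ‖y‖ ^ (-α) := by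
  have : Nonempty (Fin n) := ⟨⟨0, by exact_mod_cast (by linarith : (0 : ℝ) < n)⟩⟩
  have hβd : (n : ℝ) - 2 * σ < finrank ℝ (EuclideanSpace ℝ (Fin n)) := by
    rw [finrank_euclideanSpace_fin]; linarith
  have hf0 : ∀ y, 0 ≤ u y ^ p * ‖y‖ ^ (-α) := fun y => by have := hpos y; positivity
  have hker : ∀ x, Integrable fun y => u y ^ p * ‖y‖ ^ (-α) * ‖x - y‖ ^ (-((n : ℝ) - 2 * σ)) :=
    fun x => by_contra fun h => (hpos x).ne' ((heq x).trans (integral_undef h))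
  refine ⟨integral_le_liminf_norm_rpow_mul hf0 hint (by linarith) hβd hker heq,
    (integral_pos_iff_support_of_nonneg hf0 hint).2 <|
      (isOpen_compl_singleton.measure_pos _ (exists_ne 0)).trans_le (measure_mono fun y hy => ?_)⟩
  have := hpos y
  exact (mul_pos (by positivity) (Real.rpow_pos_of_pos (norm_pos_iff.2 hy) _)).ne'

/-- For a continuous positive solution of the integral equation,
`liminf_{|x|→∞} |x|^{n-2σ} u(x) ≥ ∫ u(y)^p |y|^{-α} dy > 0`. -/
theorem liminf_lower_bound (n : ℕ) (hn : 1 ≤ n) (σ α p : ℝ)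
    (hσ : 0 < σ) (hσ2 : σ < (n : ℝ) / 2) (hα : α < 2 * σ) (hp : 0 < p)
    (u : EuclideanSpace ℝ (Fin n) → ℝ) (hc : Continuous u) (hpos : ∀ x, 0 < u x)
    (hint : Integrable (fun y : EuclideanSpace ℝ (Fin n) => u y ^ p * ‖y‖ ^ (-α)))
    (heq : ∀ x, u x = ∫ y, u y ^ p * ‖y‖ ^ (-α) * ‖x - y‖ ^ (-((n : ℝ) - 2 * σ))) :
    (∫ y, u y ^ p * ‖y‖ ^ (-α)) ≤
        liminf (fun x => ‖x‖ ^ ((n : ℝ) - 2 * σ) * u x)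
          (comap (fun x : EuclideanSpace ℝ (Fin n) => ‖x‖) atTop) ∧
      0 < ∫ y, u y ^ p * ‖y‖ ^ (-α) :=
  liminf_lower_bound_general n σ α p hσ hσ2 u hpos hint heq
end

section
/- Let n ≥ 1, σ ∈ (0, n/2), and q > 2σ. There exists a constant C > 0 such that for every y ∈ ℝⁿ with |y| ≤ 1, ∫_{ℝⁿ} |x - y|^{-(n-2σ)} (1 + |x|)^{-q} dx ≤ C, and for every y with |y| > 1: the integral is at most C|y|^{2σ-q} if q < n, at most C·log(1+|y|)·|y|^{2σ-n} if q = n, and at most C|y|^{2σ-n} if q > n. -/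
/-!
Write `d` for the dimension, `r = d - 2σ` and `R = ‖y‖ > 0`. Split the space into three regions.
On the ball `‖x - y‖ ≤ R/2` we have `‖x‖ ≥ R/2`, so the weight is at most `(R/2)^(-q)`, and the
kernel integrates there to a multiple of `R^(2σ)`. On the rest of the ball `‖x‖ ≤ R` the kernel is
at most `(R/2)^(-r)`, and in polar coordinates the weight integrates to at most
`∫_1^(1+R) u^(d-q-1) du`, which is of order `R^(d-q)`, `log (1 + R)` or `1` according as `q < d`,
`q = d` or `q > d`. Where `‖x‖ > R` we have `‖x - y‖ ≥ ‖x‖/4`, so the integrand is at most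
`4^r ‖x‖^(-(r+q))`, which is integrable there because `q > 2σ`.
For `‖y‖ ≤ 1` the weight is at most `2^q (1 + ‖x - y‖)^(-q)`, and this reduces the bound to `y = 0`.
-/

open MeasureTheory Set Metric

local notation "dim" => Module.finrank ℝ

namespace RieszKernel

lemma div_rpow_neg {a c : ℝ} (ha : 0 ≤ a) (hc : 0 < c) (r : ℝ) :
    (a / c) ^ (-r) = c ^ r * a ^ (-r) := by
  rw [Real.div_rpow ha hc.le, Real.rpow_neg hc.le, div_inv_eq_mul, mul_comm]

lemma pow_pred_mul_rpow {k : ℕ} (hk : 0 < k) {t : ℝ} (ht : 0 < t) (a : ℝ) :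
    t ^ (k - 1) * t ^ a = t ^ ((k : ℝ) - 1 + a) := by
  rw [← Real.rpow_natCast, ← Real.rpow_add ht, Nat.cast_pred hk]

lemma integral_rpow_sub_one_le_of_pos {p R : ℝ} (hp : 0 < p) (hR : 1 ≤ R) :
    ∫ u in (1 : ℝ)..1 + R, u ^ (p - 1) ≤ (2 * R) ^ p / p := by
  rw [integral_rpow (Or.inl (by linarith)), sub_add_cancel, Real.one_rpow]
  gcongr
  calc (1 + R) ^ p - 1 ≤ (1 + R) ^ p := by linarith
    _ ≤ (2 * R) ^ p := by gcongr; linarith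

lemma integral_rpow_neg_one {R : ℝ} (hR : 0 ≤ R) :
    ∫ u in (1 : ℝ)..1 + R, u ^ (-1 : ℝ) = Real.log (1 + R) := by
  simp_rw [Real.rpow_neg_one]
  rw [integral_inv_of_pos one_pos (by linarith), div_one]

lemma integral_rpow_sub_one_le_of_neg {p R : ℝ} (hp : p < 0) (hR : 0 ≤ R) :
    ∫ u in (1 : ℝ)..1 + R, u ^ (p - 1) ≤ 1 / -p := by
  have hzero : (0 : ℝ) ∉ uIcc 1 (1 + R) := by
    rw [uIcc_of_le (by linarith)]; exact fun h ↦ by linarith [h.1]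
  rw [integral_rpow (Or.inr ⟨by linarith, hzero⟩), sub_add_cancel, Real.one_rpow,
    one_div_neg_eq_neg_one_div, ← neg_div]
  have : 0 ≤ (1 + R) ^ p := Real.rpow_nonneg (by linarith) p
  exact div_le_div_of_nonpos_of_le hp.le (by linarith)

noncomputable def decayRate (d σ q R : ℝ) : ℝ :=
  if q < d then R ^ (2 * σ - q)
  else if q = d then Real.log (1 + R) * R ^ (2 * σ - d)
  else R ^ (2 * σ - d)

lemma decayRate_nonneg (d σ q : ℝ) {R : ℝ} (hR : 0 ≤ R) : 0 ≤ decayRate d σ q R := by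
  unfold decayRate
  split_ifs
  · positivity
  · exact mul_nonneg (Real.log_nonneg (by linarith)) (by positivity)
  · positivity

lemma add_mul_integral_rpow_le_of_lt {A B d σ q R : ℝ} (hB : 0 ≤ B) (hqd : q < d)
    (hR : 1 ≤ R) :
    A * R ^ (2 * σ - q) + B * R ^ (2 * σ - d) * ∫ u in (1 : ℝ)..1 + R, u ^ (d - q - 1) ≤
      (A + B * (2 ^ (d - q) / (d - q))) * R ^ (2 * σ - q) := by
  have hpow : R ^ (2 * σ - d) * R ^ (d - q) = R ^ (2 * σ - q) := by
    rw [← Real.rpow_add (by linarith)]; ring_nf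
  calc _ ≤ A * R ^ (2 * σ - q) + B * R ^ (2 * σ - d) * ((2 * R) ^ (d - q) / (d - q)) := by
        gcongr
        exact integral_rpow_sub_one_le_of_pos (sub_pos.2 hqd) hR
    _ = _ := by
        rw [Real.mul_rpow zero_le_two (by linarith)]
        linear_combination (B * 2 ^ (d - q) / (d - q)) * hpow

lemma add_mul_integral_rpow_le_of_eq {A B d σ R : ℝ} (hA : 0 ≤ A) (hR : 1 ≤ R) :
    A * R ^ (2 * σ - d) + B * R ^ (2 * σ - d) * ∫ u in (1 : ℝ)..1 + R, u ^ (d - d - 1) ≤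
      (A / Real.log 2 + B) * (Real.log (1 + R) * R ^ (2 * σ - d)) := by
  have hlog : Real.log 2 ≤ Real.log (1 + R) := Real.log_le_log two_pos (by linarith)
  rw [sub_self, zero_sub, integral_rpow_neg_one (by linarith)]
  calc _ = (A + B * Real.log (1 + R)) * R ^ (2 * σ - d) := by ring
    _ ≤ (A / Real.log 2 * Real.log (1 + R) + B * Real.log (1 + R)) * R ^ (2 * σ - d) := by
        gcongr
        rw [div_mul_eq_mul_div, le_div_iff₀ (Real.log_pos one_lt_two)]
        gcongr
    _ = _ := by ring

lemma add_mul_integral_rpow_le_of_gt {A B d σ q R : ℝ} (hA : 0 ≤ A) (hB : 0 ≤ B) (hdq : d < q)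
    (hR : 1 ≤ R) :
    A * R ^ (2 * σ - q) + B * R ^ (2 * σ - d) * ∫ u in (1 : ℝ)..1 + R, u ^ (d - q - 1) ≤
      (A + B * (1 / (q - d))) * R ^ (2 * σ - d) := by
  calc _ ≤ A * R ^ (2 * σ - d) + B * R ^ (2 * σ - d) * (1 / (q - d)) := by
        gcongr
        simpa using integral_rpow_sub_one_le_of_neg (sub_neg.2 hdq) (by linarith)
    _ = _ := by ring

section Pointwise

variable {E : Type*} [SeminormedAddCommGroup E]

lemma closedBall_zero_eq_preimage_norm (R : ℝ) :
    closedBall (0 : E) R = norm ⁻¹' Iic R := by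
  ext; simp

lemma compl_closedBall_zero_eq_preimage_norm (R : ℝ) :
    (closedBall (0 : E) R)ᶜ = norm ⁻¹' Ioi R := by
  rw [closedBall_zero_eq_preimage_norm, ← preimage_compl, compl_Iic]

lemma integrand_le_of_norm_le_one {r q : ℝ} (hq : 0 ≤ q) {y : E} (hy : ‖y‖ ≤ 1) (x : E) :
    ‖x - y‖ ^ (-r) * (1 + ‖x‖) ^ (-q) ≤
      2 ^ q * ((closedBall 0 1).indicator (fun z : E ↦ ‖z‖ ^ (-r)) (x - y) +
        (closedBall 0 1)ᶜ.indicator (fun z : E ↦ ‖z‖ ^ (-(r + q))) (x - y)) := by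
  set t := ‖x - y‖
  have hweight : (1 + ‖x‖) ^ (-q) ≤ 2 ^ q * (1 + t) ^ (-q) := by
    rw [← div_rpow_neg (by positivity) two_pos]
    have : t ≤ ‖x‖ + ‖y‖ := norm_sub_le x y
    have : 0 ≤ ‖x‖ := norm_nonneg x
    exact Real.rpow_le_rpow_of_nonpos (by positivity) (by linarith) (by linarith)
  have hf : ‖x - y‖ ^ (-r) * (1 + ‖x‖) ^ (-q) ≤ 2 ^ q * (t ^ (-r) * (1 + t) ^ (-q)) := by
    rw [mul_left_comm]; gcongr
  refine hf.trans (mul_le_mul_of_nonneg_left ?_ (by positivity))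
  by_cases ht1 : t ≤ 1
  · rw [indicator_of_mem (mem_closedBall_zero_iff.2 ht1),
      indicator_of_notMem (notMem_compl_iff.2 (mem_closedBall_zero_iff.2 ht1)), add_zero]
    exact mul_le_of_le_one_right (by positivity)
      (Real.rpow_le_one_of_one_le_of_nonpos (by linarith [norm_nonneg (x - y)]) (by linarith))
  · have ht0 : 0 < t := by linarith
    rw [indicator_of_notMem (fun h ↦ ht1 (mem_closedBall_zero_iff.1 h)),
      indicator_of_mem (mem_compl fun h ↦ ht1 (mem_closedBall_zero_iff.1 h)), zero_add, neg_add,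
      Real.rpow_add ht0]
    exact mul_le_mul_of_nonneg_left
      (Real.rpow_le_rpow_of_nonpos ht0 (by linarith) (by linarith)) (by positivity)

lemma norm_div_four_le_norm_sub {x y : E} (hnear : ‖y‖ / 2 < ‖x - y‖) (hfar : ‖y‖ < ‖x‖) :
    ‖x‖ / 4 ≤ ‖x - y‖ := by
  have : ‖x‖ ≤ ‖x - y‖ + ‖y‖ := by simpa using norm_add_le (x - y) y
  rcases le_total ‖x‖ (2 * ‖y‖) with h | h <;> linarith

lemma integrand_le_of_norm_pos {r q : ℝ} (hr : 0 ≤ r) (hq : 0 ≤ q) {y : E} (hy : 0 < ‖y‖)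
    (x : E) :
    ‖x - y‖ ^ (-r) * (1 + ‖x‖) ^ (-q) ≤
      (‖y‖ / 2) ^ (-q) * (closedBall 0 (‖y‖ / 2)).indicator (fun z : E ↦ ‖z‖ ^ (-r)) (x - y) +
      (‖y‖ / 2) ^ (-r) * (closedBall 0 ‖y‖).indicator (fun z : E ↦ (1 + ‖z‖) ^ (-q)) x +
      4 ^ r * (closedBall 0 ‖y‖)ᶜ.indicator (fun z : E ↦ ‖z‖ ^ (-(r + q))) x := by
  set R := ‖y‖
  have h₁ : 0 ≤ (R / 2) ^ (-q) *
      (closedBall 0 (R / 2)).indicator (fun z : E ↦ ‖z‖ ^ (-r)) (x - y) :=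
    mul_nonneg (by positivity) (indicator_nonneg (fun _ _ ↦ by positivity) _)
  have h₂ : 0 ≤ (R / 2) ^ (-r) * (closedBall 0 R).indicator (fun z : E ↦ (1 + ‖z‖) ^ (-q)) x :=
    mul_nonneg (by positivity) (indicator_nonneg (fun _ _ ↦ by positivity) _)
  have h₃ : 0 ≤ 4 ^ r * (closedBall 0 R)ᶜ.indicator (fun z : E ↦ ‖z‖ ^ (-(r + q))) x :=
    mul_nonneg (by positivity) (indicator_nonneg (fun _ _ ↦ by positivity) _)
  have htri : R ≤ ‖x‖ + ‖x - y‖ := by simpa using norm_sub_le x (x - y)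
  by_cases hnear : ‖x - y‖ ≤ R / 2
  · rw [indicator_of_mem (mem_closedBall_zero_iff.2 hnear)] at h₁ ⊢
    have : (1 + ‖x‖) ^ (-q) ≤ (R / 2) ^ (-q) :=
      Real.rpow_le_rpow_of_nonpos (by positivity) (by linarith) (by linarith)
    have : ‖x - y‖ ^ (-r) * (1 + ‖x‖) ^ (-q) ≤ (R / 2) ^ (-q) * ‖x - y‖ ^ (-r) := by
      rw [mul_comm]; gcongr
    linarith
  have hkernel : ‖x - y‖ ^ (-r) ≤ (R / 2) ^ (-r) :=
    Real.rpow_le_rpow_of_nonpos (by positivity) (by linarith) (by linarith)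
  by_cases hmid : ‖x‖ ≤ R
  · rw [indicator_of_mem (mem_closedBall_zero_iff.2 hmid)] at h₂ ⊢
    have : ‖x - y‖ ^ (-r) * (1 + ‖x‖) ^ (-q) ≤ (R / 2) ^ (-r) * (1 + ‖x‖) ^ (-q) := by gcongr
    linarith
  · have hx : 0 < ‖x‖ := by linarith
    have hfar := norm_div_four_le_norm_sub (not_le.1 hnear) (not_le.1 hmid)
    rw [indicator_of_mem (mem_compl fun h ↦ hmid (mem_closedBall_zero_iff.1 h))] at h₃ ⊢
    have : ‖x - y‖ ^ (-r) * (1 + ‖x‖) ^ (-q) ≤ 4 ^ r * ‖x‖ ^ (-(r + q)) := by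
      rw [neg_add, Real.rpow_add hx, ← mul_assoc, ← div_rpow_neg hx.le four_pos]
      gcongr ?_ * ?_
      · exact Real.rpow_le_rpow_of_nonpos (by positivity) hfar (by linarith)
      · exact Real.rpow_le_rpow_of_nonpos hx (by linarith) (by linarith)
    linarith

end Pointwise

lemma indicator_preimage_norm {E : Type*} [Norm E] (T : Set ℝ) (g : ℝ → ℝ) :
    (norm ⁻¹' T).indicator (fun x : E ↦ g ‖x‖) = fun x ↦ T.indicator g ‖x‖ :=
  funext fun _ ↦ indicator_comp_right _

variable {E : Type*} [NormedAddCommGroup E] [NormedSpace ℝ E] [FiniteDimensional ℝ E]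
  [MeasurableSpace E] [BorelSpace E] (μ : Measure E)

theorem integrableOn_closedBall_one_add_norm_rpow [IsFiniteMeasureOnCompacts μ] (q R : ℝ) :
    IntegrableOn (fun x : E ↦ (1 + ‖x‖) ^ (-q)) (closedBall 0 R) μ :=
  ContinuousOn.integrableOn_compact (isCompact_closedBall 0 R) <|
    (continuous_const.add continuous_norm).continuousOn.rpow_const fun x _ ↦
      Or.inl (by positivity : (0 : ℝ) < 1 + ‖x‖).ne'

variable [Nontrivial E] [μ.IsAddHaarMeasure]

theorem integrableOn_preimage_norm_iff {T : Set ℝ} (hT : MeasurableSet T) (g : ℝ → ℝ) :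
    IntegrableOn (fun x : E ↦ g ‖x‖) (norm ⁻¹' T) μ ↔
      IntegrableOn (fun t ↦ t ^ (dim E - 1) * g t) (Ioi 0 ∩ T) := by
  rw [← integrable_indicator_iff (measurable_norm hT), indicator_preimage_norm,
    integrable_fun_norm_addHaar μ, inter_comm, ← integrableOn_indicator_iff hT]
  congr! 2 with t
  exact (indicator_mul_right T (· ^ (dim E - 1)) g).symm

theorem setIntegral_preimage_norm {T : Set ℝ} (hT : MeasurableSet T) (g : ℝ → ℝ) :
    ∫ x in norm ⁻¹' T, g ‖x‖ ∂μ =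
      μ.toSphere.real univ * ∫ t in Ioi 0 ∩ T, t ^ (dim E - 1) * g t := by
  rw [← integral_indicator (measurable_norm hT), indicator_preimage_norm,
    integral_fun_norm_addHaar μ, ← setIntegral_indicator hT, μ.toSphere_real_apply_univ,
    nsmul_eq_mul, smul_eq_mul, mul_assoc]
  simp_rw [smul_eq_mul, indicator_mul_right]

theorem integrableOn_closedBall_norm_rpow {r : ℝ} (hr : r < dim E) (R : ℝ) :
    IntegrableOn (fun x : E ↦ ‖x‖ ^ (-r)) (closedBall 0 R) μ := by
  rw [closedBall_zero_eq_preimage_norm,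
    integrableOn_preimage_norm_iff μ measurableSet_Iic (· ^ (-r)), Ioi_inter_Iic]
  refine (intervalIntegral.intervalIntegrable_rpow' (by linarith)).1.congr_fun
    (fun t ht ↦ (pow_pred_mul_rpow Module.finrank_pos ht.1 (-r)).symm) measurableSet_Ioc

theorem setIntegral_closedBall_norm_rpow {r R : ℝ} (hr : r < dim E) (hR : 0 ≤ R) :
    ∫ x in closedBall (0 : E) R, ‖x‖ ^ (-r) ∂μ =
      μ.toSphere.real univ * (R ^ ((dim E : ℝ) - r) / ((dim E : ℝ) - r)) := by
  rw [closedBall_zero_eq_preimage_norm,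
    setIntegral_preimage_norm μ measurableSet_Iic (· ^ (-r)), Ioi_inter_Iic,
    setIntegral_congr_fun measurableSet_Ioc
      (fun t ht ↦ pow_pred_mul_rpow Module.finrank_pos ht.1 (-r)),
    ← intervalIntegral.integral_of_le hR, integral_rpow (Or.inl (by linarith)),
    show (dim E : ℝ) - 1 + -r + 1 = dim E - r by ring, Real.zero_rpow (by linarith), sub_zero]

theorem integrableOn_compl_closedBall_norm_rpow {s R : ℝ} (hs : dim E < s) (hR : 0 < R) :
    IntegrableOn (fun x : E ↦ ‖x‖ ^ (-s)) (closedBall 0 R)ᶜ μ := by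
  rw [compl_closedBall_zero_eq_preimage_norm,
    integrableOn_preimage_norm_iff μ measurableSet_Ioi (· ^ (-s)), Ioi_inter_Ioi,
    sup_of_le_right hR.le]
  refine (integrableOn_Ioi_rpow_of_lt (by linarith) hR).congr_fun
    (fun t ht ↦ (pow_pred_mul_rpow Module.finrank_pos (hR.trans ht) (-s)).symm) measurableSet_Ioi

theorem setIntegral_compl_closedBall_norm_rpow {s R : ℝ} (hs : dim E < s) (hR : 0 < R) :
    ∫ x in (closedBall (0 : E) R)ᶜ, ‖x‖ ^ (-s) ∂μ =
      μ.toSphere.real univ * (R ^ ((dim E : ℝ) - s) / (s - dim E)) := by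
  rw [compl_closedBall_zero_eq_preimage_norm,
    setIntegral_preimage_norm μ measurableSet_Ioi (· ^ (-s)), Ioi_inter_Ioi,
    sup_of_le_right hR.le, setIntegral_congr_fun measurableSet_Ioi
      (fun t ht ↦ pow_pred_mul_rpow Module.finrank_pos (hR.trans ht) (-s)),
    integral_Ioi_rpow_of_lt (by linarith) hR, show (dim E : ℝ) - 1 + -s + 1 = dim E - s by ring,
    neg_div, ← div_neg, neg_sub]

theorem setIntegral_closedBall_one_add_norm_rpow_le {q R : ℝ} (hR : 0 ≤ R) :
    ∫ x in closedBall (0 : E) R, (1 + ‖x‖) ^ (-q) ∂μ ≤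
      μ.toSphere.real univ * ∫ u in (1 : ℝ)..1 + R, u ^ ((dim E : ℝ) - q - 1) := by
  rw [closedBall_zero_eq_preimage_norm,
    setIntegral_preimage_norm μ measurableSet_Iic (fun t ↦ (1 + t) ^ (-q)), Ioi_inter_Iic]
  refine mul_le_mul_of_nonneg_left ?_ measureReal_nonneg
  have hcont (a : ℝ) : ContinuousOn (fun t : ℝ ↦ (1 + t) ^ a) (uIcc 0 R) :=
    (continuous_const_add 1).continuousOn.rpow_const fun t ht ↦
      Or.inl (by rw [uIcc_of_le hR] at ht; show 1 + t ≠ 0; linarith [ht.1])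
  have hshift : ∫ u in (1 : ℝ)..1 + R, u ^ ((dim E : ℝ) - q - 1) =
      ∫ t in (0 : ℝ)..R, (1 + t) ^ ((dim E : ℝ) - q - 1) := by
    rw [intervalIntegral.integral_comp_add_left (· ^ ((dim E : ℝ) - q - 1)) 1, add_zero]
  rw [← intervalIntegral.integral_of_le hR, hshift]
  refine intervalIntegral.integral_mono_on hR
    (((continuous_pow _).continuousOn.mul (hcont _)).intervalIntegrable)
    (hcont _).intervalIntegrable fun t ht ↦ ?_
  calc t ^ (dim E - 1) * (1 + t) ^ (-q) ≤ (1 + t) ^ (dim E - 1) * (1 + t) ^ (-q) := by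
        have : 0 ≤ t := ht.1
        gcongr; linarith
    _ = (1 + t) ^ ((dim E : ℝ) - q - 1) := by
        rw [pow_pred_mul_rpow Module.finrank_pos (by linarith [ht.1])]; ring_nf

theorem integral_le_of_norm_le_one {σ q : ℝ} (hσ : 0 < σ) (hq : 2 * σ < q) {y : E}
    (hy : ‖y‖ ≤ 1) :
    ∫ x, ‖x - y‖ ^ (-((dim E : ℝ) - 2 * σ)) * (1 + ‖x‖) ^ (-q) ∂μ ≤
      2 ^ q * μ.toSphere.real univ * (1 / (2 * σ) + 1 / (q - 2 * σ)) := by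
  set r := (dim E : ℝ) - 2 * σ
  have hnear := (integrableOn_closedBall_norm_rpow μ (r := r) (by linarith) 1).integrable_indicator
    measurableSet_closedBall
  have hfar := (integrableOn_compl_closedBall_norm_rpow μ (s := r + q) (by linarith)
    one_pos).integrable_indicator measurableSet_closedBall.compl
  calc ∫ x, ‖x - y‖ ^ (-r) * (1 + ‖x‖) ^ (-q) ∂μ
      ≤ ∫ x, 2 ^ q * ((closedBall 0 1).indicator (fun z : E ↦ ‖z‖ ^ (-r)) (x - y) +
          (closedBall 0 1)ᶜ.indicator (fun z : E ↦ ‖z‖ ^ (-(r + q))) (x - y)) ∂μ :=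
        integral_mono_of_nonneg (ae_of_all _ fun x ↦ by positivity)
          (((hnear.add hfar).comp_sub_right y).const_mul _)
          (ae_of_all _ (integrand_le_of_norm_le_one (by linarith) hy))
    _ = 2 ^ q * (∫ x in closedBall 0 1, ‖x‖ ^ (-r) ∂μ +
          ∫ x in (closedBall 0 1)ᶜ, ‖x‖ ^ (-(r + q)) ∂μ) := by
        rw [integral_const_mul, integral_sub_right_eq_self (fun z ↦ _ + _) y,
          integral_add hnear hfar, integral_indicator measurableSet_closedBall,
          integral_indicator measurableSet_closedBall.compl]
    _ = _ := by
        rw [setIntegral_closedBall_norm_rpow μ (by linarith) zero_le_one,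
          setIntegral_compl_closedBall_norm_rpow μ (by linarith) one_pos, Real.one_rpow,
          Real.one_rpow, show (dim E : ℝ) - r = 2 * σ by ring,
          show r + q - dim E = q - 2 * σ by ring]
        ring

theorem integral_le_of_norm_pos {σ q : ℝ} (hσ : 0 < σ) (hσd : 2 * σ ≤ dim E) (hq : 2 * σ < q)
    {y : E} (hy : 0 < ‖y‖) :
    ∫ x, ‖x - y‖ ^ (-((dim E : ℝ) - 2 * σ)) * (1 + ‖x‖) ^ (-q) ∂μ ≤
      μ.toSphere.real univ *
        ((2 ^ (q - 2 * σ) / (2 * σ) + 4 ^ ((dim E : ℝ) - 2 * σ) / (q - 2 * σ)) *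
            ‖y‖ ^ (2 * σ - q) +
          2 ^ ((dim E : ℝ) - 2 * σ) * ‖y‖ ^ (2 * σ - dim E) *
            ∫ u in (1 : ℝ)..1 + ‖y‖, u ^ ((dim E : ℝ) - q - 1)) := by
  set r := (dim E : ℝ) - 2 * σ
  set R := ‖y‖
  have hnear := (integrableOn_closedBall_norm_rpow μ (r := r) (by linarith) (R / 2)
    ).integrable_indicator measurableSet_closedBall
  have hmid := (integrableOn_closedBall_one_add_norm_rpow μ q R).integrable_indicator
    measurableSet_closedBall
  have hfar := (integrableOn_compl_closedBall_norm_rpow μ (s := r + q) (by linarith)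
    hy).integrable_indicator measurableSet_closedBall.compl
  calc ∫ x, ‖x - y‖ ^ (-r) * (1 + ‖x‖) ^ (-q) ∂μ
      ≤ ∫ x, (R / 2) ^ (-q) *
            (closedBall 0 (R / 2)).indicator (fun z : E ↦ ‖z‖ ^ (-r)) (x - y) +
          (R / 2) ^ (-r) * (closedBall 0 R).indicator (fun z : E ↦ (1 + ‖z‖) ^ (-q)) x +
          4 ^ r * (closedBall 0 R)ᶜ.indicator (fun z : E ↦ ‖z‖ ^ (-(r + q))) x ∂μ :=
        integral_mono_of_nonneg (ae_of_all _ fun x ↦ by positivity)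
          ((((hnear.comp_sub_right y).const_mul _).add (hmid.const_mul _)).add
            (hfar.const_mul _))
          (ae_of_all _ (integrand_le_of_norm_pos (by linarith) (by linarith) hy))
    _ = (R / 2) ^ (-q) * ∫ x in closedBall 0 (R / 2), ‖x‖ ^ (-r) ∂μ +
          (R / 2) ^ (-r) * ∫ x in closedBall 0 R, (1 + ‖x‖) ^ (-q) ∂μ +
          4 ^ r * ∫ x in (closedBall 0 R)ᶜ, ‖x‖ ^ (-(r + q)) ∂μ := by
        rw [integral_add
            (by exact ((hnear.comp_sub_right y).const_mul _).add (hmid.const_mul _))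
            (hfar.const_mul _),
          integral_add (by exact (hnear.comp_sub_right y).const_mul _) (hmid.const_mul _),
          integral_const_mul, integral_const_mul, integral_const_mul,
          integral_sub_right_eq_self ((closedBall (0 : E) (R / 2)).indicator _) y,
          integral_indicator measurableSet_closedBall, integral_indicator measurableSet_closedBall,
          integral_indicator measurableSet_closedBall.compl]
    _ ≤ (R / 2) ^ (-q) * (μ.toSphere.real univ * ((R / 2) ^ (2 * σ) / (2 * σ))) +
          (R / 2) ^ (-r) *
            (μ.toSphere.real univ * ∫ u in (1 : ℝ)..1 + R, u ^ ((dim E : ℝ) - q - 1)) +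
          4 ^ r * (μ.toSphere.real univ * (R ^ (2 * σ - q) / (q - 2 * σ))) := by
        rw [setIntegral_closedBall_norm_rpow μ (by linarith) (by positivity),
          setIntegral_compl_closedBall_norm_rpow μ (by linarith) hy,
          show (dim E : ℝ) - r = 2 * σ by ring, show (dim E : ℝ) - (r + q) = 2 * σ - q by ring,
          show r + q - dim E = q - 2 * σ by ring]
        gcongr
        exact setIntegral_closedBall_one_add_norm_rpow_le μ hy.le
    _ = _ := by
        have hfirst :
            (R / 2) ^ (-q) * (R / 2) ^ (2 * σ) = 2 ^ (q - 2 * σ) * R ^ (2 * σ - q) := by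
          rw [← Real.rpow_add (by positivity), show -q + 2 * σ = -(q - 2 * σ) by ring,
            div_rpow_neg hy.le two_pos, neg_sub]
        rw [div_rpow_neg hy.le two_pos r, show -r = 2 * σ - dim E by ring]
        linear_combination (μ.toSphere.real univ / (2 * σ)) * hfirst

theorem exists_integral_le_mul_decayRate {σ q : ℝ} (hσ : 0 < σ) (hσd : 2 * σ ≤ dim E)
    (hq : 2 * σ < q) :
    ∃ C, ∀ y : E, 1 < ‖y‖ →
      ∫ x, ‖x - y‖ ^ (-((dim E : ℝ) - 2 * σ)) * (1 + ‖x‖) ^ (-q) ∂μ ≤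
        C * decayRate (dim E) σ q ‖y‖ := by
  set d : ℝ := (dim E : ℝ)
  set A := μ.toSphere.real univ * (2 ^ (q - 2 * σ) / (2 * σ) + 4 ^ (d - 2 * σ) / (q - 2 * σ))
  set B := μ.toSphere.real univ * 2 ^ (d - 2 * σ)
  have hA : 0 ≤ A := mul_nonneg measureReal_nonneg (by have := sub_pos.2 hq; positivity)
  have hB : 0 ≤ B := mul_nonneg measureReal_nonneg (by positivity)
  have hbound (y : E) (hy : 1 < ‖y‖) :
      ∫ x, ‖x - y‖ ^ (-(d - 2 * σ)) * (1 + ‖x‖) ^ (-q) ∂μ ≤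
        A * ‖y‖ ^ (2 * σ - q) + B * ‖y‖ ^ (2 * σ - d) *
          ∫ u in (1 : ℝ)..1 + ‖y‖, u ^ (d - q - 1) :=
    (integral_le_of_norm_pos μ hσ hσd hq (by linarith)).trans_eq (by ring)
  rcases lt_trichotomy q d with hlt | rfl | hgt
  · refine ⟨A + B * (2 ^ (d - q) / (d - q)), fun y hy ↦ (hbound y hy).trans ?_⟩
    rw [decayRate, if_pos hlt]
    exact add_mul_integral_rpow_le_of_lt hB hlt hy.le
  · refine ⟨A / Real.log 2 + B, fun y hy ↦ (hbound y hy).trans ?_⟩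
    rw [decayRate, if_neg (lt_irrefl _), if_pos rfl]
    exact add_mul_integral_rpow_le_of_eq hA hy.le
  · refine ⟨A + B * (1 / (q - d)), fun y hy ↦ (hbound y hy).trans ?_⟩
    rw [decayRate, if_neg (not_lt_of_gt hgt), if_neg hgt.ne']
    exact add_mul_integral_rpow_le_of_gt hA hB hgt hy.le

theorem exists_integral_le {σ q : ℝ} (hσ : 0 < σ) (hσd : 2 * σ ≤ dim E) (hq : 2 * σ < q) :
    ∃ C > 0, ∀ y : E,
      (‖y‖ ≤ 1 → ∫ x, ‖x - y‖ ^ (-((dim E : ℝ) - 2 * σ)) * (1 + ‖x‖) ^ (-q) ∂μ ≤ C) ∧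
      (1 < ‖y‖ → ∫ x, ‖x - y‖ ^ (-((dim E : ℝ) - 2 * σ)) * (1 + ‖x‖) ^ (-q) ∂μ ≤
        C * decayRate (dim E) σ q ‖y‖) := by
  obtain ⟨C₁, h₁⟩ := exists_integral_le_mul_decayRate μ hσ hσd hq
  set C₀ := 2 ^ q * μ.toSphere.real univ * (1 / (2 * σ) + 1 / (q - 2 * σ))
  refine ⟨max (max C₀ C₁) 1, by positivity, fun y ↦ ⟨fun hy ↦ ?_, fun hy ↦ ?_⟩⟩
  · exact (integral_le_of_norm_le_one μ hσ hq hy).trans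
      ((le_max_left _ _).trans (le_max_left _ _))
  · exact (h₁ y hy).trans (mul_le_mul_of_nonneg_right
      ((le_max_right _ _).trans (le_max_left _ _)) (decayRate_nonneg _ _ _ (by positivity)))

end RieszKernel

theorem riesz_kernel_integral_bounds_general (n : ℕ) (σ q : ℝ)
    (hσ : 0 < σ) (hσ2 : σ < (n : ℝ) / 2) (hq : 2 * σ < q) :
    ∃ C > 0, ∀ y : EuclideanSpace ℝ (Fin n),
      (‖y‖ ≤ 1 →
        (∫ x, ‖x - y‖ ^ (-((n : ℝ) - 2 * σ)) * (1 + ‖x‖) ^ (-q)) ≤ C) ∧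
      (1 < ‖y‖ →
        (q < n →
          (∫ x, ‖x - y‖ ^ (-((n : ℝ) - 2 * σ)) * (1 + ‖x‖) ^ (-q)) ≤
            C * ‖y‖ ^ (2 * σ - q)) ∧
        (q = n →
          (∫ x, ‖x - y‖ ^ (-((n : ℝ) - 2 * σ)) * (1 + ‖x‖) ^ (-q)) ≤
            C * Real.log (1 + ‖y‖) * ‖y‖ ^ (2 * σ - (n : ℝ))) ∧
        ((n : ℝ) < q →
          (∫ x, ‖x - y‖ ^ (-((n : ℝ) - 2 * σ)) * (1 + ‖x‖) ^ (-q)) ≤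
            C * ‖y‖ ^ (2 * σ - (n : ℝ)))) := by
  have : NeZero n := ⟨by rintro rfl; norm_num at hσ2; linarith⟩
  obtain ⟨C, hC, hbound⟩ :=
    RieszKernel.exists_integral_le (volume : Measure (EuclideanSpace ℝ (Fin n))) hσ
      (by rw [finrank_euclideanSpace_fin]; linarith) hq
  simp only [finrank_euclideanSpace_fin] at hbound
  refine ⟨C, hC, fun y ↦ ⟨(hbound y).1, fun hy ↦ ?_⟩⟩
  have h := (hbound y).2 hy
  refine ⟨fun hlt ↦ ?_, fun heq ↦ ?_, fun hgt ↦ ?_⟩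
  · rwa [RieszKernel.decayRate, if_pos hlt] at h
  · rwa [RieszKernel.decayRate, if_neg heq.not_lt, if_pos heq, ← mul_assoc] at h
  · rwa [RieszKernel.decayRate, if_neg (not_lt_of_gt hgt), if_neg hgt.ne'] at h

/-- Uniform bounds for `∫ |x-y|^{-(n-2σ)}(1+|x|)^{-q} dx` when `q > 2σ`:
bounded for `|y| ≤ 1`, and for `|y| > 1` bounded by `C|y|^{2σ-q}` if `q < n`,
by `C log(1+|y|)|y|^{2σ-n}` if `q = n`, and by `C|y|^{2σ-n}` if `q > n`. -/
theorem riesz_kernel_integral_bounds (n : ℕ) (hn : 1 ≤ n) (σ q : ℝ)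
    (hσ : 0 < σ) (hσ2 : σ < (n : ℝ) / 2) (hq : 2 * σ < q) :
    ∃ C > 0, ∀ y : EuclideanSpace ℝ (Fin n),
      (‖y‖ ≤ 1 →
        (∫ x, ‖x - y‖ ^ (-((n : ℝ) - 2 * σ)) * (1 + ‖x‖) ^ (-q)) ≤ C) ∧
      (1 < ‖y‖ →
        (q < n →
          (∫ x, ‖x - y‖ ^ (-((n : ℝ) - 2 * σ)) * (1 + ‖x‖) ^ (-q)) ≤
            C * ‖y‖ ^ (2 * σ - q)) ∧
        (q = n →
          (∫ x, ‖x - y‖ ^ (-((n : ℝ) - 2 * σ)) * (1 + ‖x‖) ^ (-q)) ≤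
            C * Real.log (1 + ‖y‖) * ‖y‖ ^ (2 * σ - (n : ℝ))) ∧
        ((n : ℝ) < q →
          (∫ x, ‖x - y‖ ^ (-((n : ℝ) - 2 * σ)) * (1 + ‖x‖) ^ (-q)) ≤
            C * ‖y‖ ^ (2 * σ - (n : ℝ)))) :=
  riesz_kernel_integral_bounds_general n σ q hσ hσ2 hq
end

section
/- Let n ≥ 1, σ ∈ (0, n/2), α < 2σ, and p ≥ (n - α)/(n - 2σ) with p > 1. Suppose u : ℝⁿ → [0, ∞) is measurable with ∫_{ℝⁿ} |y|^{-α} u(y)^p (1 + |y|)^{-γ} dy < ∞ for every γ > n - 2σ + (α - 2σ)/(p - 1). Then the function v(x) = ∫_{ℝⁿ} |y|^{-α} u(y)^p |x - y|^{-(n-2σ)} dy satisfies ∫_{ℝⁿ} v(x)(1 + |x|)^{-q} dx < ∞ for every q > n + (α - 2σ)/(p - 1). -/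
/-!
Write `a = n - 2σ` and `δ = (α - 2σ)/(p - 1) < 0`. By Tonelli the integral in question is
`∫ |y|^{-α} u(y)^p K(y) dy` with `K(y) = ∫ |x - y|^{-a} (1 + |x|)^{-q} dx`. Pick `b` with
`n + δ < b < min q n`; then `p ≥ (n - α)/(n - 2σ)` gives `a + b > n`. Splitting the `x`-space,
with `t = 1 + |y|`, into `|x - y| < t/2`, `|x| < 2t` and `|x| ≥ 2t` bounds `K(y) ≲ t^{n-a-b}`:
each piece is controlled by an integral of `|x|^{-e}` over a ball or the complement of a ball,
which scales like `R^{n-e}` and is finite for `e < n`, resp. `e > n`. Finally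
`a + b - n = b - 2σ > n - 2σ + δ`, so the hypothesis on `u` applies.
-/

open MeasureTheory Metric Set Module
open scoped ENNReal Pointwise

-- `x ≠ 0` is needed because the real power `0 ^ (-b)` is `0`, not `∞`.
theorem ofReal_norm_sub_rpow_mul_one_add_norm_rpow_le {E : Type*} [NormedAddCommGroup E]
    {a b : ℝ} (ha : 0 ≤ a) (hb : 0 ≤ b) (y : E) {x : E} (hx : x ≠ 0) :
    ENNReal.ofReal (‖x - y‖ ^ (-a)) * ENNReal.ofReal ((1 + ‖x‖) ^ (-b))
      ≤ (ball 0 (2⁻¹ * (1 + ‖y‖))).indicator (fun z ↦ ENNReal.ofReal (‖z‖ ^ (-a))) (x - y)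
            * ENNReal.ofReal ((2⁻¹ * (1 + ‖y‖)) ^ (-b))
        + (ball 0 (2 * (1 + ‖y‖))).indicator
            (fun z ↦ ENNReal.ofReal ((2⁻¹ * (1 + ‖y‖)) ^ (-a)) * ENNReal.ofReal (‖z‖ ^ (-b))) x
        + (ball 0 (2 * (1 + ‖y‖)))ᶜ.indicator
            (fun z ↦ ENNReal.ofReal (2 ^ a) * ENNReal.ofReal (‖z‖ ^ (-(a + b)))) x := by
  set t := 1 + ‖y‖
  have hy := norm_nonneg y
  have hxpos : 0 < ‖x‖ := norm_pos_iff.2 hx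
  have hxy₁ : ‖x‖ - ‖y‖ ≤ ‖x - y‖ := norm_sub_norm_le x y
  have hxy₂ : ‖y‖ - ‖x‖ ≤ ‖x - y‖ := norm_sub_rev y x ▸ norm_sub_norm_le y x
  have hone : (1 + ‖x‖) ^ (-b) ≤ ‖x‖ ^ (-b) :=
    Real.rpow_le_rpow_of_nonpos hxpos (by linarith) (by linarith)
  by_cases hnear : x - y ∈ ball (0 : E) (2⁻¹ * t)
  · have hxy : ‖x - y‖ < 2⁻¹ * t := by simpa using hnear
    have ht : 2⁻¹ * t ≤ 1 + ‖x‖ := by linarith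
    refine le_trans ?_ (le_add_right (le_add_right le_rfl))
    rw [indicator_of_mem hnear]
    exact mul_le_mul_right (ENNReal.ofReal_le_ofReal
      (Real.rpow_le_rpow_of_nonpos (by positivity) ht (by linarith))) _
  have hxy : 2⁻¹ * t ≤ ‖x - y‖ := by simpa using hnear
  rw [indicator_of_notMem hnear, zero_mul, zero_add]
  by_cases hmid : x ∈ ball (0 : E) (2 * t)
  · rw [indicator_of_mem hmid, indicator_of_notMem (notMem_compl_iff.2 hmid), add_zero]
    exact mul_le_mul' (ENNReal.ofReal_le_ofReal
      (Real.rpow_le_rpow_of_nonpos (by positivity) hxy (by linarith)))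
      (ENNReal.ofReal_le_ofReal hone)
  have hx2 : 2 * t ≤ ‖x‖ := by simpa using hmid
  rw [indicator_of_notMem hmid, indicator_of_mem (mem_compl hmid), zero_add,
    ← ENNReal.ofReal_mul (by positivity), ← ENNReal.ofReal_mul (by positivity)]
  refine ENNReal.ofReal_le_ofReal ?_
  calc ‖x - y‖ ^ (-a) * (1 + ‖x‖) ^ (-b)
      ≤ (2⁻¹ * ‖x‖) ^ (-a) * ‖x‖ ^ (-b) := by
        gcongr ?_ * ?_
        exact Real.rpow_le_rpow_of_nonpos (by positivity) (by linarith) (by linarith)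
    _ = 2 ^ a * ‖x‖ ^ (-(a + b)) := by
        rw [Real.mul_rpow (by norm_num) hxpos.le, Real.inv_rpow two_pos.le,
          ← Real.rpow_neg two_pos.le, neg_neg, mul_assoc, ← Real.rpow_add hxpos, neg_add]

section HaarMeasure

variable {E : Type*} [NormedAddCommGroup E] [NormedSpace ℝ E] [MeasurableSpace E] [BorelSpace E]
  [FiniteDimensional ℝ E] (μ : Measure E) [μ.IsAddHaarMeasure]

theorem setLIntegral_smul_set_of_pos (f : E → ℝ≥0∞) {R : ℝ} (hR : 0 < R) (s : Set E) :
    ∫⁻ x in R • s, f x ∂μ = ENNReal.ofReal (R ^ finrank ℝ E) * ∫⁻ x in s, f (R • x) ∂μ := by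
  let e : E ≃ᵐ E := (Homeomorph.smul (Units.mk0 R⁻¹ (inv_ne_zero hR.ne'))).toMeasurableEquiv
  have he : Measure.map e μ = ENNReal.ofReal (R ^ finrank ℝ E) • μ := by
    change Measure.map (fun x : E ↦ R⁻¹ • x) μ = _
    rw [Measure.map_addHaar_smul μ (inv_ne_zero hR.ne'), inv_pow, inv_inv,
      abs_of_pos (pow_pos hR _)]
  have hs : e ⁻¹' s = R • s := by
    ext x
    simp [e, mem_smul_set_iff_inv_smul_mem₀ hR.ne']
  calc ∫⁻ x in R • s, f x ∂μ = ∫⁻ x in s, f (R • x) ∂Measure.map e μ := by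
        rw [e.restrict_map, lintegral_map_equiv, hs]
        simp [e, smul_smul, hR.ne']
    _ = _ := by rw [he, Measure.restrict_smul, lintegral_smul_measure, smul_eq_mul]

theorem setLIntegral_smul_set_norm_rpow {R : ℝ} (hR : 0 < R) (s : Set E) (e : ℝ) :
    ∫⁻ x in R • s, ENNReal.ofReal (‖x‖ ^ e) ∂μ
      = ENNReal.ofReal (R ^ (finrank ℝ E + e)) * ∫⁻ x in s, ENNReal.ofReal (‖x‖ ^ e) ∂μ := by
  have hscale (x : E) :
      ENNReal.ofReal (‖R • x‖ ^ e) = ENNReal.ofReal (R ^ e) * ENNReal.ofReal (‖x‖ ^ e) := by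
    rw [norm_smul, Real.norm_of_nonneg hR.le, Real.mul_rpow hR.le (norm_nonneg x),
      ENNReal.ofReal_mul (by positivity)]
  simp_rw [setLIntegral_smul_set_of_pos μ _ hR, hscale]
  rw [lintegral_const_mul' _ _ ENNReal.ofReal_ne_top, ← mul_assoc,
    ← ENNReal.ofReal_mul (by positivity), Real.rpow_add hR, Real.rpow_natCast]

theorem setLIntegral_ball_norm_rpow {R : ℝ} (hR : 0 < R) (e : ℝ) :
    ∫⁻ x in ball (0 : E) R, ENNReal.ofReal (‖x‖ ^ e) ∂μ
      = ENNReal.ofReal (R ^ (finrank ℝ E + e))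
          * ∫⁻ x in ball (0 : E) 1, ENNReal.ofReal (‖x‖ ^ e) ∂μ := by
  rw [← smul_unitBall_of_pos hR, setLIntegral_smul_set_norm_rpow μ hR]

theorem setLIntegral_compl_ball_norm_rpow {R : ℝ} (hR : 0 < R) (e : ℝ) :
    ∫⁻ x in (ball (0 : E) R)ᶜ, ENNReal.ofReal (‖x‖ ^ e) ∂μ
      = ENNReal.ofReal (R ^ (finrank ℝ E + e))
          * ∫⁻ x in (ball (0 : E) 1)ᶜ, ENNReal.ofReal (‖x‖ ^ e) ∂μ := by
  have hcompl : (R • ball (0 : E) 1)ᶜ = R • (ball (0 : E) 1)ᶜ :=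
    (Set.smul_set_compl (a := Units.mk0 R hR.ne')).symm
  rw [← smul_unitBall_of_pos hR, hcompl, setLIntegral_smul_set_norm_rpow μ hR]

theorem setLIntegral_unitBall_norm_rpow_lt_top [Nontrivial E] {s : ℝ}
    (hs : -(finrank ℝ E : ℝ) < s) :
    ∫⁻ x in ball (0 : E) 1, ENNReal.ofReal (‖x‖ ^ s) ∂μ < ∞ := by
  refine IntegrableOn.setLIntegral_lt_top ((integrableOn_fun_norm_addHaar μ (f := (· ^ s))).2 ?_)
  have hpow : EqOn (fun y : ℝ ↦ y ^ (finrank ℝ E - 1 + s))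
      (fun y ↦ y ^ (finrank ℝ E - 1) • y ^ s) (Ioo 0 1) := by
    intro y hy
    have : 1 ≤ finrank ℝ E := finrank_pos
    beta_reduce
    rw [smul_eq_mul, Real.rpow_add hy.1, ← Real.rpow_natCast, Nat.cast_sub this, Nat.cast_one]
  refine (integrableOn_congr_fun hpow measurableSet_Ioo).1
    ((intervalIntegral.integrableOn_Ioo_rpow_iff one_pos).2 ?_)
  linarith

theorem setLIntegral_compl_unitBall_norm_rpow_lt_top {s : ℝ} (hs : s < -(finrank ℝ E : ℝ)) :
    ∫⁻ x in (ball (0 : E) 1)ᶜ, ENNReal.ofReal (‖x‖ ^ s) ∂μ < ∞ := by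
  have hs0 : s ≤ 0 := by linarith [(finrank ℝ E).cast_nonneg (α := ℝ)]
  have hbound : ∀ x ∈ (ball (0 : E) 1)ᶜ,
      ENNReal.ofReal (‖x‖ ^ s) ≤ ENNReal.ofReal (2 ^ (-s)) * ENNReal.ofReal ((1 + ‖x‖) ^ s) := by
    intro x hx
    have hx1 : 1 ≤ ‖x‖ := by simpa using hx
    rw [← ENNReal.ofReal_mul (by positivity)]
    refine ENNReal.ofReal_le_ofReal ?_
    calc ‖x‖ ^ s = 2 ^ (-s) * (2 * ‖x‖) ^ s := by
          rw [Real.mul_rpow two_pos.le (norm_nonneg x), ← mul_assoc, ← Real.rpow_add two_pos]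
          simp
      _ ≤ 2 ^ (-s) * (1 + ‖x‖) ^ s :=
          mul_le_mul_of_nonneg_left
            (Real.rpow_le_rpow_of_nonpos (by positivity) (by linarith) hs0) (by positivity)
  calc ∫⁻ x in (ball (0 : E) 1)ᶜ, ENNReal.ofReal (‖x‖ ^ s) ∂μ
      ≤ ∫⁻ x in (ball (0 : E) 1)ᶜ,
          ENNReal.ofReal (2 ^ (-s)) * ENNReal.ofReal ((1 + ‖x‖) ^ s) ∂μ :=
        setLIntegral_mono' measurableSet_ball.compl hbound
    _ ≤ ENNReal.ofReal (2 ^ (-s)) * ∫⁻ x, ENNReal.ofReal ((1 + ‖x‖) ^ s) ∂μ := by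
        rw [lintegral_const_mul' _ _ ENNReal.ofReal_ne_top]
        exact mul_le_mul_right (setLIntegral_le_lintegral _ _) _
    _ < ∞ := by
        refine ENNReal.mul_lt_top ENNReal.ofReal_lt_top ?_
        simpa using finite_integral_one_add_norm (μ := μ) (r := -s) (by linarith)

theorem lintegral_norm_sub_rpow_mul_one_add_norm_rpow_le [Nontrivial E] {a b : ℝ} (ha : 0 ≤ a)
    (hb : 0 ≤ b) (y : E) :
    ∫⁻ x, ENNReal.ofReal (‖x - y‖ ^ (-a)) * ENNReal.ofReal ((1 + ‖x‖) ^ (-b)) ∂μ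
      ≤ (∫⁻ x in ball 0 (2⁻¹ * (1 + ‖y‖)), ENNReal.ofReal (‖x‖ ^ (-a)) ∂μ)
            * ENNReal.ofReal ((2⁻¹ * (1 + ‖y‖)) ^ (-b))
        + ENNReal.ofReal ((2⁻¹ * (1 + ‖y‖)) ^ (-a))
            * ∫⁻ x in ball 0 (2 * (1 + ‖y‖)), ENNReal.ofReal (‖x‖ ^ (-b)) ∂μ
        + ENNReal.ofReal (2 ^ a)
            * ∫⁻ x in (ball 0 (2 * (1 + ‖y‖)))ᶜ, ENNReal.ofReal (‖x‖ ^ (-(a + b))) ∂μ := by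
  refine (lintegral_mono_ae <| (Measure.ae_ne μ 0).mono fun x hx ↦
    ofReal_norm_sub_rpow_mul_one_add_norm_rpow_le ha hb y hx).trans_eq ?_
  set t := 1 + ‖y‖
  have hmeas (e : ℝ) : Measurable fun z : E ↦ ENNReal.ofReal (‖z‖ ^ e) := by fun_prop
  have hnear : Measurable fun x : E ↦ (ball 0 (2⁻¹ * t)).indicator
      (fun z ↦ ENNReal.ofReal (‖z‖ ^ (-a))) (x - y) * ENNReal.ofReal ((2⁻¹ * t) ^ (-b)) :=
    (((hmeas _).indicator measurableSet_ball).comp (measurable_id.sub_const y)).mul_const _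
  have hmid : Measurable fun x : E ↦ (ball 0 (2 * t)).indicator
      (fun z ↦ ENNReal.ofReal ((2⁻¹ * t) ^ (-a)) * ENNReal.ofReal (‖z‖ ^ (-b))) x :=
    ((hmeas _).const_mul _).indicator measurableSet_ball
  rw [lintegral_add_left (by exact hnear.add hmid), lintegral_add_left hnear,
    lintegral_mul_const' _ _ ENNReal.ofReal_ne_top,
    lintegral_sub_right_eq_self (fun z ↦ (ball 0 (2⁻¹ * t)).indicator _ z) y,
    lintegral_indicator measurableSet_ball, lintegral_indicator measurableSet_ball,
    lintegral_indicator measurableSet_ball.compl, lintegral_const_mul' _ _ ENNReal.ofReal_ne_top,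
    lintegral_const_mul' _ _ ENNReal.ofReal_ne_top]

theorem exists_lintegral_norm_sub_rpow_mul_one_add_norm_rpow_le {a b : ℝ}
    (ha : a < finrank ℝ E) (hb : b < finrank ℝ E) (hab : finrank ℝ E < a + b) :
    ∃ C < ∞, ∀ y : E,
      ∫⁻ x, ENNReal.ofReal (‖x - y‖ ^ (-a)) * ENNReal.ofReal ((1 + ‖x‖) ^ (-b)) ∂μ
        ≤ C * ENNReal.ofReal ((1 + ‖y‖) ^ (finrank ℝ E - a - b)) := by
  set d : ℝ := (finrank ℝ E : ℝ)
  have : Nontrivial E := finrank_pos_iff.1 ((Nat.cast_pos (α := ℝ)).1 (by linarith))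
  set I : ℝ → ℝ≥0∞ := fun e ↦ ∫⁻ x in ball (0 : E) 1, ENNReal.ofReal (‖x‖ ^ (-e)) ∂μ
  set J : ℝ≥0∞ := ∫⁻ x in (ball (0 : E) 1)ᶜ, ENNReal.ofReal (‖x‖ ^ (-(a + b))) ∂μ
  have hIa : I a < ∞ := setLIntegral_unitBall_norm_rpow_lt_top μ (by linarith)
  have hIb : I b < ∞ := setLIntegral_unitBall_norm_rpow_lt_top μ (by linarith)
  have hJ : J < ∞ := setLIntegral_compl_unitBall_norm_rpow_lt_top μ (by linarith)
  refine ⟨ENNReal.ofReal ((2⁻¹ : ℝ) ^ (d - a - b)) * I a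
      + ENNReal.ofReal ((2⁻¹ : ℝ) ^ (-a) * 2 ^ (d - b)) * I b
      + ENNReal.ofReal (2 ^ a * 2 ^ (d - a - b)) * J, by finiteness, fun y ↦ ?_⟩
  refine (lintegral_norm_sub_rpow_mul_one_add_norm_rpow_le μ (by linarith) (by linarith) y).trans_eq
    ?_
  set t := 1 + ‖y‖
  have ht : 0 < t := by positivity
  have hr : (0 : ℝ) < 2⁻¹ * t := by positivity
  have hR : (0 : ℝ) < 2 * t := by positivity
  have hnear : (2⁻¹ * t) ^ (d + -a) * (2⁻¹ * t) ^ (-b)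
      = (2⁻¹ : ℝ) ^ (d - a - b) * t ^ (d - a - b) := by
    rw [← Real.rpow_add hr, ← Real.mul_rpow (by norm_num) ht.le, ← sub_eq_add_neg,
      ← sub_eq_add_neg]
  have hmid : (2⁻¹ * t) ^ (-a) * (2 * t) ^ (d + -b)
      = ((2⁻¹ : ℝ) ^ (-a) * 2 ^ (d - b)) * t ^ (d - a - b) := by
    rw [← sub_eq_add_neg, Real.mul_rpow (by norm_num) ht.le, Real.mul_rpow (by norm_num) ht.le,
      show d - a - b = -a + (d - b) by ring, Real.rpow_add ht (-a)]
    ring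
  have hfar : (2 : ℝ) ^ a * (2 * t) ^ (d + -(a + b))
      = 2 ^ a * 2 ^ (d - a - b) * t ^ (d - a - b) := by
    rw [Real.mul_rpow (by norm_num) ht.le, show d + -(a + b) = d - a - b by ring]
    ring
  rw [setLIntegral_ball_norm_rpow μ hr, setLIntegral_ball_norm_rpow μ hR,
    setLIntegral_compl_ball_norm_rpow μ hR, mul_right_comm, ← ENNReal.ofReal_mul (by positivity),
    ← mul_assoc, ← ENNReal.ofReal_mul (by positivity), ← mul_assoc,
    ← ENNReal.ofReal_mul (by positivity), hnear, hmid, hfar]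
  simp only [ENNReal.ofReal_mul' (q := t ^ (d - a - b)) (by positivity)]
  ring

theorem lintegral_lintegral_ofReal_mul_norm_sub_rpow_swap {w : E → ℝ} (hw : Measurable w) (s : ℝ)
    {φ : E → ℝ≥0∞} (hφ : Measurable φ) :
    ∫⁻ x, (∫⁻ y, ENNReal.ofReal (w y * ‖x - y‖ ^ s) ∂μ) * φ x ∂μ
      = ∫⁻ y, ENNReal.ofReal (w y) * ∫⁻ x, ENNReal.ofReal (‖x - y‖ ^ s) * φ x ∂μ ∂μ := by
  have hsplit (x y : E) : ENNReal.ofReal (w y * ‖x - y‖ ^ s) * φ x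
      = ENNReal.ofReal (w y) * (ENNReal.ofReal (‖x - y‖ ^ s) * φ x) := by
    rw [ENNReal.ofReal_mul' (by positivity), mul_assoc]
  have hmeas : Measurable fun z : E × E ↦ ENNReal.ofReal (w z.2 * ‖z.1 - z.2‖ ^ s) * φ z.1 := by
    fun_prop
  calc ∫⁻ x, (∫⁻ y, ENNReal.ofReal (w y * ‖x - y‖ ^ s) ∂μ) * φ x ∂μ
      = ∫⁻ x, ∫⁻ y, ENNReal.ofReal (w y * ‖x - y‖ ^ s) * φ x ∂μ ∂μ :=
        lintegral_congr fun x ↦ (lintegral_mul_const _ (by fun_prop)).symm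
    _ = ∫⁻ y, ∫⁻ x, ENNReal.ofReal (w y * ‖x - y‖ ^ s) * φ x ∂μ ∂μ :=
        lintegral_lintegral_swap hmeas.aemeasurable
    _ = _ := lintegral_congr fun y ↦ by
        simp_rw [hsplit]
        exact lintegral_const_mul _ (by fun_prop)

end HaarMeasure

theorem riesz_potential_growth_general (n : ℕ) (σ α p : ℝ)
    (hσ : 0 < σ) (hσ2 : σ < (n : ℝ) / 2) (hα : α < 2 * σ)
    (hp1 : 1 < p) (hp2 : ((n : ℝ) - α) / ((n : ℝ) - 2 * σ) ≤ p)
    (u : EuclideanSpace ℝ (Fin n) → ℝ) (hm : Measurable u)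
    (hint : ∀ γ : ℝ, (n : ℝ) - 2 * σ + (α - 2 * σ) / (p - 1) < γ →
      (∫⁻ y, ENNReal.ofReal (‖y‖ ^ (-α) * u y ^ p * (1 + ‖y‖) ^ (-γ))) < ⊤) :
    ∀ q : ℝ, (n : ℝ) + (α - 2 * σ) / (p - 1) < q →
      (∫⁻ x, (∫⁻ y, ENNReal.ofReal
          (‖y‖ ^ (-α) * u y ^ p * ‖x - y‖ ^ (-((n : ℝ) - 2 * σ)))) *
        ENNReal.ofReal ((1 + ‖x‖) ^ (-q))) < ⊤ := by
  intro q hq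
  set δ := (α - 2 * σ) / (p - 1)
  have hδ : δ < 0 := div_neg_of_neg_of_pos (by linarith) (by linarith)
  have h2σ : 2 * σ ≤ n + δ := by
    rw [div_le_iff₀ (by linarith)] at hp2
    rw [← sub_le_iff_le_add', le_div_iff₀ (by linarith)]
    nlinarith
  obtain ⟨b, hδb, hbqn⟩ := exists_between (lt_min hq (by linarith : n + δ < (n : ℝ)))
  obtain ⟨hbq, hbn⟩ := lt_min_iff.1 hbqn
  obtain ⟨C, hC, hK⟩ := exists_lintegral_norm_sub_rpow_mul_one_add_norm_rpow_le
    (volume : Measure (EuclideanSpace ℝ (Fin n))) (a := n - 2 * σ) (b := b)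
    (by rw [finrank_euclideanSpace_fin]; linarith) (by rwa [finrank_euclideanSpace_fin])
    (by rw [finrank_euclideanSpace_fin]; linarith)
  simp only [finrank_euclideanSpace_fin, show (n : ℝ) - (n - 2 * σ) - b = -(b - 2 * σ) by ring]
    at hK
  rw [lintegral_lintegral_ofReal_mul_norm_sub_rpow_swap volume (by fun_prop) _ (by fun_prop)]
  calc ∫⁻ y, ENNReal.ofReal (‖y‖ ^ (-α) * u y ^ p) * ∫⁻ x, ENNReal.ofReal
          (‖x - y‖ ^ (-((n : ℝ) - 2 * σ))) * ENNReal.ofReal ((1 + ‖x‖) ^ (-q))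
      ≤ ∫⁻ y, ENNReal.ofReal (‖y‖ ^ (-α) * u y ^ p)
          * (C * ENNReal.ofReal ((1 + ‖y‖) ^ (-(b - 2 * σ)))) := by
        gcongr with y
        refine le_trans (lintegral_mono fun x ↦ ?_) (hK y)
        gcongr
        linarith [norm_nonneg x]
    _ = C * ∫⁻ y, ENNReal.ofReal (‖y‖ ^ (-α) * u y ^ p * (1 + ‖y‖) ^ (-(b - 2 * σ))) := by
        rw [← lintegral_const_mul' _ _ hC.ne]
        refine lintegral_congr fun y ↦ ?_
        rw [ENNReal.ofReal_mul' (q := (1 + ‖y‖) ^ _) (by positivity)]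
        ring
    _ < ⊤ := ENNReal.mul_lt_top hC (hint _ (by linarith))

/-- Growth estimate for the Riesz potential `v(x) = ∫ |y|^{-α}u(y)^p|x-y|^{-(n-2σ)} dy`:
if `∫ |y|^{-α}u(y)^p(1+|y|)^{-γ} dy < ∞` for every `γ > n - 2σ + (α-2σ)/(p-1)`,
then `∫ v(x)(1+|x|)^{-q} dx < ∞` for every `q > n + (α-2σ)/(p-1)`. -/
theorem riesz_potential_growth (n : ℕ) (hn : 1 ≤ n) (σ α p : ℝ)
    (hσ : 0 < σ) (hσ2 : σ < (n : ℝ) / 2) (hα : α < 2 * σ)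
    (hp1 : 1 < p) (hp2 : ((n : ℝ) - α) / ((n : ℝ) - 2 * σ) ≤ p)
    (u : EuclideanSpace ℝ (Fin n) → ℝ) (hm : Measurable u) (hnn : ∀ y, 0 ≤ u y)
    (hint : ∀ γ : ℝ, (n : ℝ) - 2 * σ + (α - 2 * σ) / (p - 1) < γ →
      (∫⁻ y, ENNReal.ofReal (‖y‖ ^ (-α) * u y ^ p * (1 + ‖y‖) ^ (-γ))) < ⊤) :
    ∀ q : ℝ, (n : ℝ) + (α - 2 * σ) / (p - 1) < q →
      (∫⁻ x, (∫⁻ y, ENNReal.ofReal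
          (‖y‖ ^ (-α) * u y ^ p * ‖x - y‖ ^ (-((n : ℝ) - 2 * σ)))) *
        ENNReal.ofReal ((1 + ‖x‖) ^ (-q))) < ⊤ :=
  riesz_potential_growth_general n σ α p hσ hσ2 hα hp1 hp2 u hm hint
end

section
/- Let n ≥ 1, σ ∈ (0, n/2), α ∈ [0, 2σ), and 0 < p ≤ (n + 2σ - 2α)/(n - 2σ). Suppose u : ℝⁿ \ {0} → (0, ∞) is continuous, satisfies u(x) = ∫_{ℝⁿ} u(y)^p |y|^{-α}|x-y|^{-(n-2σ)} dy for all x ≠ 0, and suppose that for every x ∈ ℝⁿ \ {0}, every 0 < λ < |x|, and every y with |y - x| ≥ λ, y ≠ 0, one has (λ/|y-x|)^{n-2σ} u(x + λ²(y-x)/|y-x|²) ≤ u(y). Then for every unit vector e ∈ ℝⁿ, every a > 0, and every z ≠ 0 with z·e < a, we have u(z) ≥ u(z - 2(z·e - a)e); consequently u is radially symmetric about the origin and nonincreasing in |x|. -/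
/-!
Take the sphere with center `ε⁻¹ • e` and radius `ε⁻¹ - a`. As `ε → 0⁺` it flattens to the
hyperplane `⟪·, e⟫ = a`, the inversion in it tends to the reflection across that hyperplane and
the factor `(λ / ‖y - x‖) ^ s` tends to `1`: written in terms of `ε`, the Kelvin transform is
continuous in `ε` up to `ε = 0`. Continuity of `u` then turns the moving-sphere inequalities into
the reflection inequality. If `‖z‖ < ‖w‖`, then `w` is the reflection of `z` across the
perpendicular bisector of `z` and `w`, which has `0` on the side of `z`; hence `u w ≤ u z`, and the
case `‖z‖ = ‖w‖` follows by continuity.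
-/

open Filter Topology RealInnerProductSpace

variable {E : Type*} [NormedAddCommGroup E] [InnerProductSpace ℝ E]

noncomputable def kelvinTransform (s : ℝ) (u : E → ℝ) (x : E) (l : ℝ) (y : E) : ℝ :=
  (l / ‖y - x‖) ^ s * u (x + (l ^ 2 / ‖y - x‖ ^ 2) • (y - x))

lemma norm_sub_inv_smul {ε : ℝ} (hε : 0 < ε) (z e : E) :
    ‖z - ε⁻¹ • e‖ = ε⁻¹ * ‖ε • z - e‖ := by
  rw [← norm_smul_of_nonneg (inv_nonneg.2 hε.le), smul_sub, inv_smul_smul₀ hε.ne']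

lemma kelvinTransform_inv_smul {s a ε : ℝ} (hε : 0 < ε) (u : E → ℝ) {e : E} (he : ‖e‖ = 1)
    {z : E} (hz : ε • z ≠ e) :
    kelvinTransform s u (ε⁻¹ • e) (ε⁻¹ - a) z =
      ((1 - a * ε) / ‖ε • z - e‖) ^ s * u ((‖ε • z - e‖ ^ 2)⁻¹ •
        ((1 - a * ε) ^ 2 • z + (ε * (‖z‖ ^ 2 - a ^ 2) + 2 * (a - ⟪z, e⟫)) • e)) := by
  have hN : ‖ε • z - e‖ ≠ 0 := norm_ne_zero_iff.2 (sub_ne_zero.2 hz)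
  have hN2 : ‖ε • z - e‖ ^ 2 = ε ^ 2 * ‖z‖ ^ 2 - 2 * ε * ⟪z, e⟫ + 1 := by
    rw [norm_sub_sq_real, norm_smul, real_inner_smul_left, he, Real.norm_eq_abs, abs_of_pos hε]
    ring
  have hscale : (ε⁻¹ - a) / ‖z - ε⁻¹ • e‖ = (1 - a * ε) / ‖ε • z - e‖ := by
    rw [norm_sub_inv_smul hε]
    field_simp
  unfold kelvinTransform
  rw [← div_pow, hscale, div_pow]
  congr 2
  rw [smul_add, smul_smul, smul_smul]
  have hz_coeff : (1 - a * ε) ^ 2 / ‖ε • z - e‖ ^ 2 = (‖ε • z - e‖ ^ 2)⁻¹ * (1 - a * ε) ^ 2 := by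
    ring
  have he_coeff : ε⁻¹ * (1 - (1 - a * ε) ^ 2 / ‖ε • z - e‖ ^ 2) =
      (‖ε • z - e‖ ^ 2)⁻¹ * (ε * (‖z‖ ^ 2 - a ^ 2) + 2 * (a - ⟪z, e⟫)) := by
    field_simp
    rw [hN2]
    ring
  rw [← hz_coeff, ← he_coeff]
  module

lemma eventually_smul_ne (z : E) {e : E} (he : e ≠ 0) : ∀ᶠ ε : ℝ in 𝓝 0, ε • z ≠ e := by
  have : Tendsto (fun ε : ℝ => ε • z) (𝓝 0) (𝓝 0) := by
    simpa using (tendsto_id (x := 𝓝 (0 : ℝ))).smul_const z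
  exact this.eventually_ne he.symm

lemma tendsto_kelvinTransform_inv_smul (s a : ℝ) {u : E → ℝ} {e : E} (he : ‖e‖ = 1) (z : E)
    (hu : ContinuousAt u (z - (2 * (⟪z, e⟫ - a)) • e)) :
    Tendsto (fun ε : ℝ => kelvinTransform s u (ε⁻¹ • e) (ε⁻¹ - a) z) (𝓝[>] 0)
      (𝓝 (u (z - (2 * (⟪z, e⟫ - a)) • e))) := by
  have he0 : e ≠ 0 := norm_ne_zero_iff.1 (by simp [he])
  have hpoint : Tendsto (fun ε : ℝ => (‖ε • z - e‖ ^ 2)⁻¹ •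
      ((1 - a * ε) ^ 2 • z + (ε * (‖z‖ ^ 2 - a ^ 2) + 2 * (a - ⟪z, e⟫)) • e)) (𝓝 0)
      (𝓝 (z - (2 * (⟪z, e⟫ - a)) • e)) := by
    have : ContinuousAt (fun ε : ℝ => (‖ε • z - e‖ ^ 2)⁻¹ •
        ((1 - a * ε) ^ 2 • z + (ε * (‖z‖ ^ 2 - a ^ 2) + 2 * (a - ⟪z, e⟫)) • e)) 0 := by
      fun_prop (disch := simp [he])
    convert this.tendsto using 2
    simp [he]
    module
  have hscale : Tendsto (fun ε : ℝ => ((1 - a * ε) / ‖ε • z - e‖) ^ s) (𝓝 0) (𝓝 1) := by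
    have : Tendsto (fun ε : ℝ => (1 - a * ε) / ‖ε • z - e‖) (𝓝 0) (𝓝 1) := by
      have : ContinuousAt (fun ε : ℝ => (1 - a * ε) / ‖ε • z - e‖) 0 := by
        fun_prop (disch := simp [he])
      simpa [he] using this.tendsto
    simpa using this.rpow_const (p := s) (Or.inl one_ne_zero)
  have hlim := (hscale.mul (hu.tendsto.comp hpoint)).mono_left
    (nhdsWithin_le_nhds (s := Set.Ioi 0))
  rw [one_mul] at hlim
  refine hlim.congr' ?_
  filter_upwards [self_mem_nhdsWithin, nhdsWithin_le_nhds (eventually_smul_ne z he0)] with ε hε hz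
  exact (kelvinTransform_inv_smul hε u he hz).symm

theorem reflection_le_of_kelvinTransform_le {s : ℝ} {u : E → ℝ} (hc : ContinuousOn u {0}ᶜ)
    (hms : ∀ x : E, x ≠ 0 → ∀ l : ℝ, 0 < l → l < ‖x‖ → ∀ y : E, l ≤ ‖y - x‖ → y ≠ 0 →
      kelvinTransform s u x l y ≤ u y)
    {e : E} (he : ‖e‖ = 1) {a : ℝ} (ha : 0 < a) {z : E} (hz : z ≠ 0) (hza : ⟪z, e⟫ < a) :
    u (z - (2 * (⟪z, e⟫ - a)) • e) ≤ u z := by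
  have hw : z - (2 * (⟪z, e⟫ - a)) • e ≠ 0 := by
    intro h
    have := congrArg (⟪·, e⟫) h
    simp only [inner_sub_left, real_inner_smul_left, real_inner_self_eq_norm_sq, he,
      inner_zero_left] at this
    linarith
  refine le_of_tendsto (tendsto_kelvinTransform_inv_smul s a he z
    (hc.continuousAt (isOpen_compl_singleton.mem_nhds hw))) ?_
  filter_upwards [self_mem_nhdsWithin, nhdsWithin_le_nhds (gt_mem_nhds (inv_pos.2 ha))]
    with ε (hε : 0 < ε) hεa
  have hnorm : ‖ε⁻¹ • e‖ = ε⁻¹ := by rw [norm_smul_of_nonneg (inv_nonneg.2 hε.le), he, mul_one]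
  have hfar : ε⁻¹ - a ≤ ‖z - ε⁻¹ • e‖ := by
    have := real_inner_le_norm (ε⁻¹ • e - z) e
    rw [inner_sub_left, real_inner_smul_left, real_inner_self_eq_norm_sq, he, norm_sub_rev] at this
    linarith
  refine hms (ε⁻¹ • e) ?_ (ε⁻¹ - a) ?_ ?_ z hfar hz
  · rw [← norm_ne_zero_iff, hnorm]; positivity
  · rwa [sub_pos, lt_inv_comm₀ ha hε]
  · linarith

section Reflection

variable {u : E → ℝ}
  (href : ∀ e : E, ‖e‖ = 1 → ∀ a : ℝ, 0 < a → ∀ z : E, z ≠ 0 → ⟪z, e⟫ < a →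
    u (z - (2 * (⟪z, e⟫ - a)) • e) ≤ u z)
include href

lemma le_of_norm_lt_of_reflection_le {z w : E} (hz : z ≠ 0) (hlt : ‖z‖ < ‖w‖) : u w ≤ u z := by
  set d := ‖w - z‖
  have hd : 0 < d := norm_pos_iff.2 (sub_ne_zero.2 (by rintro rfl; exact hlt.false))
  set e := d⁻¹ • (w - z)
  set a := (‖w‖ ^ 2 - ‖z‖ ^ 2) / (2 * d)
  have he : ‖e‖ = 1 := by rw [norm_smul_of_nonneg (inv_nonneg.2 hd.le), inv_mul_cancel₀ hd.ne']
  have ha : 0 < a := div_pos (by nlinarith [norm_nonneg z]) (by positivity)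
  have hkey : ⟪z, e⟫ - a = -(d / 2) := by
    have hd2 : d ^ 2 = ‖w‖ ^ 2 - 2 * ⟪w, z⟫ + ‖z‖ ^ 2 := norm_sub_sq_real w z
    simp only [e, a, real_inner_smul_right, inner_sub_right, real_inner_self_eq_norm_sq]
    field_simp
    linarith [real_inner_comm z w]
  have hreflect : z - (2 * (⟪z, e⟫ - a)) • e = w := by
    rw [hkey, smul_smul]
    field_simp
    simp
  simpa only [hreflect] using href e he a ha z hz (by linarith)

lemma le_of_norm_le_of_reflection_le (hc : ContinuousOn u {0}ᶜ) {z w : E} (hz : z ≠ 0)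
    (hw : w ≠ 0) (hle : ‖z‖ ≤ ‖w‖) : u w ≤ u z := by
  have hlim : Tendsto (fun t : ℝ => u (t • w)) (𝓝[>] 1) (𝓝 (u w)) := by
    have : Tendsto (fun t : ℝ => t • w) (𝓝[>] 1) (𝓝 w) := by
      simpa using ((tendsto_id (x := 𝓝 (1 : ℝ))).smul_const w).mono_left nhdsWithin_le_nhds
    exact (hc.continuousAt (isOpen_compl_singleton.mem_nhds hw)).tendsto.comp this
  refine le_of_tendsto hlim ?_
  filter_upwards [self_mem_nhdsWithin] with t (ht : 1 < t)
  refine le_of_norm_lt_of_reflection_le href hz ?_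
  rw [norm_smul_of_nonneg (by linarith)]
  nlinarith [norm_pos_iff.2 hw]

end Reflection

theorem moving_spheres_radial_symmetry_general (n : ℕ) (σ : ℝ)
    (u : EuclideanSpace ℝ (Fin n) → ℝ)
    (hc : ContinuousOn u {(0 : EuclideanSpace ℝ (Fin n))}ᶜ)
    (hms : ∀ x : EuclideanSpace ℝ (Fin n), x ≠ 0 → ∀ l : ℝ, 0 < l → l < ‖x‖ →
      ∀ y : EuclideanSpace ℝ (Fin n), l ≤ ‖y - x‖ → y ≠ 0 →
        (l / ‖y - x‖) ^ ((n : ℝ) - 2 * σ) *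
          u (x + (l ^ 2 / ‖y - x‖ ^ 2) • (y - x)) ≤ u y) :
    (∀ e : EuclideanSpace ℝ (Fin n), ‖e‖ = 1 → ∀ a : ℝ, 0 < a →
      ∀ z : EuclideanSpace ℝ (Fin n), z ≠ 0 → ⟪z, e⟫ < a →
        u (z - (2 * (⟪z, e⟫ - a)) • e) ≤ u z) ∧
    (∀ z w : EuclideanSpace ℝ (Fin n), z ≠ 0 → w ≠ 0 → ‖z‖ = ‖w‖ → u z = u w) ∧
    (∀ z w : EuclideanSpace ℝ (Fin n), z ≠ 0 → w ≠ 0 → ‖z‖ ≤ ‖w‖ → u w ≤ u z) := by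
  have href : ∀ e : EuclideanSpace ℝ (Fin n), ‖e‖ = 1 → ∀ a : ℝ, 0 < a →
      ∀ z : EuclideanSpace ℝ (Fin n), z ≠ 0 → ⟪z, e⟫ < a →
        u (z - (2 * (⟪z, e⟫ - a)) • e) ≤ u z :=
    fun _ he _ ha _ hz hza => reflection_le_of_kelvinTransform_le hc hms he ha hz hza
  refine ⟨href, fun z w hz hw h => le_antisymm ?_ ?_,
    fun z w hz hw => le_of_norm_le_of_reflection_le href hc hz hw⟩
  · exact le_of_norm_le_of_reflection_le href hc hw hz h.ge
  · exact le_of_norm_le_of_reflection_le href hc hz hw h.le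

/-- From the moving-spheres property to reflection inequalities and radial symmetry:
a positive singular solution of the integral equation satisfying the moving-spheres
conclusion for all centers `x ≠ 0` and radii `0 < λ < |x|` satisfies
`u(z) ≥ u(z - 2(z·e - a)e)` whenever `|e| = 1`, `a > 0`, `z·e < a`, `z ≠ 0`;
consequently `u` is radially symmetric about `0` and nonincreasing in `|x|`. -/
theorem moving_spheres_radial_symmetry (n : ℕ) (hn : 1 ≤ n) (σ α p : ℝ)
    (hσ : 0 < σ) (hσ2 : σ < (n : ℝ) / 2) (hα0 : 0 ≤ α) (hα : α < 2 * σ)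
    (hp0 : 0 < p) (hp : p ≤ ((n : ℝ) + 2 * σ - 2 * α) / ((n : ℝ) - 2 * σ))
    (u : EuclideanSpace ℝ (Fin n) → ℝ)
    (hc : ContinuousOn u {(0 : EuclideanSpace ℝ (Fin n))}ᶜ)
    (hpos : ∀ x : EuclideanSpace ℝ (Fin n), x ≠ 0 → 0 < u x)
    (heq : ∀ x : EuclideanSpace ℝ (Fin n), x ≠ 0 →
      u x = ∫ y, u y ^ p * ‖y‖ ^ (-α) * ‖x - y‖ ^ (-((n : ℝ) - 2 * σ)))
    (hms : ∀ x : EuclideanSpace ℝ (Fin n), x ≠ 0 → ∀ l : ℝ, 0 < l → l < ‖x‖ →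
      ∀ y : EuclideanSpace ℝ (Fin n), l ≤ ‖y - x‖ → y ≠ 0 →
        (l / ‖y - x‖) ^ ((n : ℝ) - 2 * σ) *
          u (x + (l ^ 2 / ‖y - x‖ ^ 2) • (y - x)) ≤ u y) :
    (∀ e : EuclideanSpace ℝ (Fin n), ‖e‖ = 1 → ∀ a : ℝ, 0 < a →
      ∀ z : EuclideanSpace ℝ (Fin n), z ≠ 0 → ⟪z, e⟫ < a →
        u (z - (2 * (⟪z, e⟫ - a)) • e) ≤ u z) ∧
    (∀ z w : EuclideanSpace ℝ (Fin n), z ≠ 0 → w ≠ 0 → ‖z‖ = ‖w‖ → u z = u w) ∧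
    (∀ z w : EuclideanSpace ℝ (Fin n), z ≠ 0 → w ≠ 0 → ‖z‖ ≤ ‖w‖ → u w ≤ u z) :=
  moving_spheres_radial_symmetry_general n σ u hc hms
end
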